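/- arXiv:1509.05363 — 10 statements merged into one kernel-verified Lean document; each statement's English description precedes it below -/
import Mathlib

section
/- Define the completely multiplicative function χ̃₃ : ℕ+ → {-1,1} by χ̃₃(p) = χ₃(p) for primes p ≠ 3 and χ̃₃(3) = 1, where χ₃ is the nontrivial character mod 3 (χ₃(n) = 1 if n ≡ 1 mod 3, = -1 if n ≡ 2 mod 3, = 0 if 3 ∣ n). Then for every positive integer n, ∑_{j=1}^n χ̃₃(j) equals the number of digits equal to 1 in the base-3 expansion of n. -/
/-! Away from 3 the function agrees with the character mod 3, and it is invariant under
`n ↦ 3n`. Hence every block `3m+1, 3m+2, 3m+3` contributes `1 - 1 + g (m+1)`, so that the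
partial sums satisfy `S(3q + r) = S(q) + [r = 1]`, which is the recursion of the base-3
count of digits equal to 1. -/

theorem eq_ite_of_mod_three_ne_zero {g : ℕ → ℤ} (h1 : g 1 = 1)
    (hmul : ∀ m n : ℕ, 0 < m → 0 < n → g (m * n) = g m * g n)
    (hp : ∀ p : ℕ, p.Prime → p ≠ 3 → g p = if p % 3 = 1 then 1 else -1) (n : ℕ)
    (hn : n % 3 ≠ 0) : g n = if n % 3 = 1 then 1 else -1 := by
  induction n using induction_on_primes with
  | zero => simp at hn
  | one => simpa using h1
  | prime_mul p a hprime ih =>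
    have hpa : (p * a) % 3 = p % 3 * (a % 3) % 3 := Nat.mul_mod p a 3
    have hp3 : p % 3 ≠ 0 := by intro h; simp [hpa, h] at hn
    have ha3 : a % 3 ≠ 0 := by intro h; simp [hpa, h] at hn
    have hp_ne : p ≠ 3 := by rintro rfl; simp at hp3
    rw [hmul p a hprime.pos (Nat.pos_of_ne_zero (by rintro rfl; simp at ha3)),
      hp p hprime hp_ne, ih ha3, hpa]
    rcases (by omega : p % 3 = 1 ∨ p % 3 = 2) with hp' | hp' <;>
      rcases (by omega : a % 3 = 1 ∨ a % 3 = 2) with ha' | ha' <;> simp [hp', ha']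

section PartialSums

variable {g : ℕ → ℤ}

theorem apply_three_mul_add_one (hχ : ∀ n, n % 3 ≠ 0 → g n = if n % 3 = 1 then 1 else -1)
    (m : ℕ) : g (3 * m + 1) = 1 := by
  rw [hχ _ (by omega), if_pos (by omega)]

theorem apply_three_mul_add_two (hχ : ∀ n, n % 3 ≠ 0 → g n = if n % 3 = 1 then 1 else -1)
    (m : ℕ) : g (3 * m + 2) = -1 := by
  rw [hχ _ (by omega), if_neg (by omega)]

theorem sum_Icc_three_mul (hχ : ∀ n, n % 3 ≠ 0 → g n = if n % 3 = 1 then 1 else -1)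
    (h3 : ∀ n, 0 < n → g (3 * n) = g n) (m : ℕ) :
    ∑ j ∈ Finset.Icc 1 (3 * m), g j = ∑ j ∈ Finset.Icc 1 m, g j := by
  induction m with
  | zero => simp
  | succ m ih =>
    have hblock : 3 * (m + 1) = 3 * m + 2 + 1 := by ring
    rw [hblock, Finset.sum_Icc_succ_top (by omega), Finset.sum_Icc_succ_top (by omega),
      Finset.sum_Icc_succ_top (by omega), ih, Finset.sum_Icc_succ_top (by omega),
      apply_three_mul_add_one hχ, apply_three_mul_add_two hχ, ← hblock, h3 _ m.succ_pos]
    ring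

theorem sum_Icc_three_mul_add (hχ : ∀ n, n % 3 ≠ 0 → g n = if n % 3 = 1 then 1 else -1)
    (h3 : ∀ n, 0 < n → g (3 * n) = g n) (q r : ℕ) (hr : r < 3) :
    ∑ j ∈ Finset.Icc 1 (3 * q + r), g j =
      ∑ j ∈ Finset.Icc 1 q, g j + if r = 1 then 1 else 0 := by
  interval_cases r
  · simp [sum_Icc_three_mul hχ h3]
  · rw [Finset.sum_Icc_succ_top (by omega), sum_Icc_three_mul hχ h3,
      apply_three_mul_add_one hχ, if_pos rfl]
  · rw [Finset.sum_Icc_succ_top (by omega), Finset.sum_Icc_succ_top (by omega),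
      sum_Icc_three_mul hχ h3, apply_three_mul_add_one hχ, apply_three_mul_add_two hχ]
    simp

theorem sum_Icc_eq_count_digits_one (hχ : ∀ n, n % 3 ≠ 0 → g n = if n % 3 = 1 then 1 else -1)
    (h3 : ∀ n, 0 < n → g (3 * n) = g n) (n : ℕ) :
    ∑ j ∈ Finset.Icc 1 n, g j = ((Nat.digits 3 n).count 1 : ℤ) := by
  induction n using Nat.strong_induction_on with
  | _ n ih =>
    rcases Nat.eq_zero_or_pos n with rfl | hn
    · simp
    rw [Nat.digits_def' (by norm_num) hn, List.count_cons, ← Nat.div_add_mod n 3,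
      sum_Icc_three_mul_add hχ h3 _ _ (Nat.mod_lt n (by norm_num)), Nat.div_add_mod,
      ih (n / 3) (Nat.div_lt_self hn (by norm_num))]
    split_ifs <;> simp_all

end PartialSums

/-- Borwein–Choi–Coons: the partial sums of the completely multiplicative
function `χ̃₃` (with `χ̃₃(3) = 1`, agreeing with the nontrivial character mod 3
at other primes) count the digits equal to 1 in the base-3 expansion of `n`. -/
theorem bcc_partial_sum_eq_digit_count (g : ℕ → ℤ)
    (h1 : g 1 = 1)
    (hmul : ∀ m n : ℕ, 0 < m → 0 < n → g (m * n) = g m * g n)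
    (hp : ∀ p : ℕ, p.Prime → p ≠ 3 → g p = if p % 3 = 1 then 1 else -1)
    (h3 : g 3 = 1) :
    ∀ n : ℕ, 0 < n →
      ∑ j ∈ Finset.Icc 1 n, g j = ((Nat.digits 3 n).count 1 : ℤ) := by
  intro n _
  refine sum_Icc_eq_count_digits_one (eq_ite_of_mod_three_ne_zero h1 hmul hp) (fun m hm => ?_) n
  rw [hmul 3 m (by norm_num) hm, h3, one_mul]
end

section
/- With χ̃₃ as above and n_k = 1 + 3 + 3² + ⋯ + 3^k, one has ∑_{j=1}^{n_k} χ̃₃(j) = k + 1. In particular sup_n |∑_{j=1}^n χ̃₃(j)| = ∞, so the completely multiplicative function χ̃₃ has infinite discrepancy, with partial sums growing at least like log n along this sequence. -/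
/-!
On integers prime to 3, `χ̃₃` is `χ₃`, and `χ̃₃(3m) = χ̃₃(m)`. Hence in the block
`3n+2, 3n+3, 3n+4` the outer terms cancel and the middle one contributes `χ̃₃(n+1)`, so
`S(3n+1) = S(n) + 1` for the partial sums `S`. Since `n_{k+1} = 3 n_k + 1`, iterating from
`S(n_0) = S(1) = 1` gives `S(n_k) = k + 1`.
-/

section PartialSums

variable {g : ℕ → ℤ}

theorem apply_eq_ite_of_mod_three_ne_zero (h1 : g 1 = 1)
    (hmul : ∀ m n : ℕ, 0 < m → 0 < n → g (m * n) = g m * g n)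
    (hp : ∀ p : ℕ, p.Prime → p ≠ 3 → g p = if p % 3 = 1 then 1 else -1) :
    ∀ n : ℕ, n % 3 ≠ 0 → g n = if n % 3 = 1 then 1 else -1 := by
  refine induction_on_primes (by simp) (fun _ => by simpa using h1) ?_
  intro p a hprime ih hpa
  have hp3 : p % 3 ≠ 0 := fun h => hpa (by rw [Nat.mul_mod, h, zero_mul, Nat.zero_mod])
  have ha3 : a % 3 ≠ 0 := fun h => hpa (by rw [Nat.mul_mod, h, mul_zero, Nat.zero_mod])
  rw [hmul p a hprime.pos (by omega), hp p hprime (by omega), ih ha3, Nat.mul_mod]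
  rcases (by omega : p % 3 = 1 ∨ p % 3 = 2) with hp' | hp' <;>
    rcases (by omega : a % 3 = 1 ∨ a % 3 = 2) with ha' | ha' <;>
    simp [hp', ha']

theorem sum_Icc_three_mul_add_one (hone : ∀ m, g (3 * m + 1) = 1)
    (htwo : ∀ m, g (3 * m + 2) = -1) (hthree : ∀ m, g (3 * (m + 1)) = g (m + 1)) (n : ℕ) :
    ∑ j ∈ Finset.Icc 1 (3 * n + 1), g j = ∑ j ∈ Finset.Icc 1 n, g j + 1 := by
  induction n with
  | zero => simpa using hone 0
  | succ n ih =>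
    have hblock : ∑ j ∈ Finset.Icc 1 (3 * (n + 1) + 1), g j
        = ∑ j ∈ Finset.Icc 1 (3 * n + 1), g j
          + (g (3 * n + 2) + g (3 * (n + 1)) + g (3 * (n + 1) + 1)) := by
      rw [show 3 * (n + 1) + 1 = 3 * n + 1 + 1 + 1 + 1 by ring,
        Finset.sum_Icc_succ_top (by omega), Finset.sum_Icc_succ_top (by omega),
        Finset.sum_Icc_succ_top (by omega)]
      ring_nf
    rw [hblock, ih, htwo, hthree, hone, Finset.sum_Icc_succ_top (by omega)]
    ring

theorem sum_Icc_sum_range_pow_three (hone : ∀ m, g (3 * m + 1) = 1)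
    (htwo : ∀ m, g (3 * m + 2) = -1) (hthree : ∀ m, g (3 * (m + 1)) = g (m + 1)) (k : ℕ) :
    ∑ j ∈ Finset.Icc 1 (∑ i ∈ Finset.range (k + 1), 3 ^ i), g j = k + 1 := by
  induction k with
  | zero => simpa using hone 0
  | succ k ih =>
    rw [geom_sum_succ, sum_Icc_three_mul_add_one hone htwo hthree, ih]
    push_cast
    ring

end PartialSums

/-- Along `n_k = 1 + 3 + ⋯ + 3^k` the partial sums of `χ̃₃` equal `k+1`;
in particular `χ̃₃` has unbounded partial sums, hence infinite discrepancy. -/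
theorem bcc_partial_sum_along_nk (g : ℕ → ℤ)
    (h1 : g 1 = 1)
    (hmul : ∀ m n : ℕ, 0 < m → 0 < n → g (m * n) = g m * g n)
    (hp : ∀ p : ℕ, p.Prime → p ≠ 3 → g p = if p % 3 = 1 then 1 else -1)
    (h3 : g 3 = 1) :
    (∀ k : ℕ,
      ∑ j ∈ Finset.Icc 1 (∑ i ∈ Finset.range (k + 1), 3 ^ i), g j = k + 1) ∧
    ∀ C : ℤ, ∃ n : ℕ, 0 < n ∧ C < |∑ j ∈ Finset.Icc 1 n, g j| := by
  have hval := apply_eq_ite_of_mod_three_ne_zero h1 hmul hp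
  have hone (m : ℕ) : g (3 * m + 1) = 1 := by
    rw [hval _ (by omega), if_pos (by omega)]
  have htwo (m : ℕ) : g (3 * m + 2) = -1 := by
    rw [hval _ (by omega), if_neg (by omega)]
  have hthree (m : ℕ) : g (3 * (m + 1)) = g (m + 1) := by
    rw [hmul 3 (m + 1) (by norm_num) m.succ_pos, h3, one_mul]
  have hsum := sum_Icc_sum_range_pow_three hone htwo hthree
  refine ⟨hsum, fun C => ⟨∑ i ∈ Finset.range (C.toNat + 1), 3 ^ i, ?_, ?_⟩⟩
  · exact Finset.sum_pos (fun i _ => by positivity) ⟨0, by simp⟩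
  · rw [hsum, abs_of_nonneg (by positivity)]
    linarith [Int.self_le_toNat C]
end

section
/- Let H be a real Hilbert space with orthonormal system (e_a)_{a≥0}, and define f : ℕ+ → H by f(3^a m) = χ₃(m) e_a for m coprime to 3. Then f takes values in the unit sphere, and for every n ≥ 1 and d ≥ 1 one has ‖∑_{j=1}^n f(jd)‖² ≤ #{i ≥ 0 : 3^i ≤ n} ≤ log n / log 3 + 1. -/
/-!
Write `j = 3^a m` with `3 ∤ m` and `d = 3^b d'`. Grouping the terms of `∑_{j ≤ n} f(jd)` by `a`
and using the complete multiplicativity of `χ₃` gives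
`∑_{j ≤ n} f(jd) = χ₃(d') ∑_{3^a ≤ n} S(⌊n / 3^a⌋) e_{a+b}`, where `S(N) = ∑_{m ≤ N} χ₃(m)`.
By orthonormality the squared norm is `∑_{3^a ≤ n} S(⌊n / 3^a⌋)²`, and every `S(N)` is `0` or `1`.
-/

open Finset

theorem Nat.factorization_pow_mul_of_not_dvd {p m : ℕ} (a : ℕ) (hp : p.Prime) (hm : ¬ p ∣ m) :
    (p ^ a * m).factorization p = a := by
  rw [Nat.factorization_mul (pow_ne_zero a hp.ne_zero) (by rintro rfl; simp at hm),
    hp.factorization_pow]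
  simp [Nat.factorization_eq_zero_of_not_dvd hm]

theorem Nat.sum_Icc_eq_sum_sum_pow_mul {M : Type*} [AddCommMonoid M] {p : ℕ} (hp : p.Prime)
    (n : ℕ) (g : ℕ → M) :
    ∑ j ∈ Icc 1 n, g j =
      ∑ a ∈ range (n + 1), ∑ m ∈ Icc 1 (n / p ^ a) with ¬ p ∣ m, g (p ^ a * m) := by
  rw [sum_sigma']
  refine sum_nbij' (fun j => ⟨j.factorization p, ordCompl[p] j⟩) (fun x => p ^ x.1 * x.2)
    ?_ ?_ (fun j _ => Nat.ordProj_mul_ordCompl_eq_self j p) ?_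
    (fun j _ => by rw [Nat.ordProj_mul_ordCompl_eq_self])
  · intro j hj
    rw [mem_Icc] at hj
    have hj0 : j ≠ 0 := by omega
    have hproj : p ^ j.factorization p ≤ n := (Nat.ordProj_le p hj0).trans hj.2
    simp only [mem_sigma, mem_range, mem_filter, mem_Icc]
    refine ⟨?_, ⟨Nat.ordCompl_pos p hj0, ?_⟩, Nat.not_dvd_ordCompl hp hj0⟩
    · have := Nat.lt_pow_self (n := j.factorization p) hp.one_lt
      omega
    · rw [Nat.le_div_iff_mul_le (Nat.ordProj_pos j p), mul_comm,
        Nat.ordProj_mul_ordCompl_eq_self]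
      exact hj.2
  · rintro ⟨a, m⟩ hx
    simp only [mem_sigma, mem_range, mem_filter, mem_Icc] at hx
    rw [mem_Icc]
    exact ⟨Nat.mul_pos (pow_pos hp.pos a) hx.2.1.1,
      (Nat.mul_le_mul_left _ hx.2.1.2).trans (Nat.mul_div_le n _)⟩
  · rintro ⟨a, m⟩ hx
    simp only [mem_sigma, mem_filter] at hx
    rw [Nat.factorization_pow_mul_of_not_dvd a hp hx.2.2,
      Nat.mul_div_cancel_left m (pow_pos hp.pos a)]

theorem Nat.card_filter_range_pow_le {b n : ℕ} (hb : 1 < b) (hn : n ≠ 0) :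
    #{i ∈ range (n + 1) | b ^ i ≤ n} = Nat.log b n + 1 := by
  rw [← card_range (Nat.log b n + 1)]
  congr 1
  ext i
  simp only [mem_filter, mem_range, Nat.lt_succ_iff, ← Nat.le_log_iff_pow_le hb hn]
  exact ⟨And.right, fun h => ⟨h.trans (Nat.log_le_self b n), h⟩⟩

theorem Nat.card_filter_range_pow_le_le_logb {b n : ℕ} (hb : 1 < b) (hn : n ≠ 0) :
    (#{i ∈ range (n + 1) | b ^ i ≤ n} : ℝ) ≤ Real.logb b n + 1 := by
  rw [Nat.card_filter_range_pow_le hb hn, Nat.cast_succ]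
  gcongr
  exact Real.natLog_le_logb n b

theorem Orthonormal.norm_sum_smul_sq {ι E : Type*} [NormedAddCommGroup E]
    [InnerProductSpace ℝ E] {v : ι → E} (hv : Orthonormal ℝ v) (s : Finset ι) (c : ι → ℝ) :
    ‖∑ i ∈ s, c i • v i‖ ^ 2 = ∑ i ∈ s, c i ^ 2 := by
  rw [← real_inner_self_eq_norm_sq, hv.inner_sum c c s]
  simp [sq]

noncomputable def χ₃ (m : ℕ) : ℝ := if m % 3 = 1 then 1 else if m % 3 = 2 then -1 else 0

lemma χ₃_eq_ite_of_not_dvd {m : ℕ} (hm : ¬ 3 ∣ m) : χ₃ m = if m % 3 = 1 then 1 else -1 := by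
  unfold χ₃; split_ifs <;> first | rfl | omega

lemma χ₃_eq_zero_of_dvd {m : ℕ} (hm : 3 ∣ m) : χ₃ m = 0 := by
  unfold χ₃; split_ifs <;> first | rfl | omega

lemma abs_χ₃_of_not_dvd {m : ℕ} (hm : ¬ 3 ∣ m) : |χ₃ m| = 1 := by
  rw [χ₃_eq_ite_of_not_dvd hm]; split_ifs <;> norm_num

lemma χ₃_mul (m n : ℕ) : χ₃ (m * n) = χ₃ m * χ₃ n := by
  unfold χ₃
  have hmn := Nat.mul_mod m n 3
  have hm := Nat.mod_lt m (show 0 < 3 by norm_num)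
  have hn := Nat.mod_lt n (show 0 < 3 by norm_num)
  interval_cases h : m % 3 <;> interval_cases h' : n % 3 <;> simp_all

lemma sum_Icc_χ₃ (N : ℕ) : ∑ m ∈ Icc 1 N, χ₃ m = if N % 3 = 1 then 1 else 0 := by
  induction N with
  | zero => simp
  | succ N ih =>
    rw [sum_Icc_succ_top (by omega), ih]
    unfold χ₃
    have := Nat.mod_lt N (show 0 < 3 by norm_num)
    interval_cases h : N % 3 <;> simp [Nat.add_mod, h]

lemma sq_sum_Icc_div_pow_χ₃_le (n a : ℕ) :
    (∑ m ∈ Icc 1 (n / 3 ^ a), χ₃ m) ^ 2 ≤ if 3 ^ a ≤ n then 1 else 0 := by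
  split_ifs with h
  · rw [sum_Icc_χ₃]; split_ifs <;> norm_num
  · simp [Nat.div_eq_of_lt (not_le.1 h)]

namespace BorweinChoiCoons

variable {H : Type*} [NormedAddCommGroup H] [InnerProductSpace ℝ H] {e f : ℕ → H}

lemma norm_eq_one (he : Orthonormal ℝ e)
    (hf : ∀ a m, ¬ 3 ∣ m → f (3 ^ a * m) = χ₃ m • e a) {n : ℕ} (hn : n ≠ 0) : ‖f n‖ = 1 := by
  obtain ⟨a, m, hm, rfl⟩ := Nat.exists_eq_pow_mul_and_not_dvd hn 3 (by norm_num)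
  rw [hf a m hm, norm_smul, he.norm_eq_one, Real.norm_eq_abs, abs_χ₃_of_not_dvd hm, mul_one]

lemma sum_apply_mul_pow_mul (hf : ∀ a m, ¬ 3 ∣ m → f (3 ^ a * m) = χ₃ m • e a)
    (n b : ℕ) {d : ℕ} (hd : ¬ 3 ∣ d) :
    ∑ j ∈ Icc 1 n, f (j * (3 ^ b * d)) =
      ∑ a ∈ range (n + 1), (χ₃ d * ∑ m ∈ Icc 1 (n / 3 ^ a), χ₃ m) • e (a + b) := by
  rw [Nat.sum_Icc_eq_sum_sum_pow_mul Nat.prime_three]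
  refine sum_congr rfl fun a _ => ?_
  calc ∑ m ∈ Icc 1 (n / 3 ^ a) with ¬ 3 ∣ m, f (3 ^ a * m * (3 ^ b * d))
      = ∑ m ∈ Icc 1 (n / 3 ^ a) with ¬ 3 ∣ m, (χ₃ d * χ₃ m) • e (a + b) := by
        refine sum_congr rfl fun m hm => ?_
        have hmd : ¬ 3 ∣ m * d := fun h =>
          (Nat.prime_three.dvd_mul.1 h).elim (mem_filter.1 hm).2 hd
        rw [show 3 ^ a * m * (3 ^ b * d) = 3 ^ (a + b) * (m * d) by ring, hf _ _ hmd,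
          χ₃_mul, mul_comm]
    _ = (χ₃ d * ∑ m ∈ Icc 1 (n / 3 ^ a) with ¬ 3 ∣ m, χ₃ m) • e (a + b) := by
        rw [mul_sum, sum_smul]
    _ = (χ₃ d * ∑ m ∈ Icc 1 (n / 3 ^ a), χ₃ m) • e (a + b) := by
        rw [sum_filter_of_ne fun m _ h => mt χ₃_eq_zero_of_dvd h]

lemma norm_sum_apply_mul_sq_le (he : Orthonormal ℝ e)
    (hf : ∀ a m, ¬ 3 ∣ m → f (3 ^ a * m) = χ₃ m • e a) (n : ℕ) {d : ℕ} (hd : d ≠ 0) :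
    ‖∑ j ∈ Icc 1 n, f (j * d)‖ ^ 2 ≤ #{i ∈ range (n + 1) | 3 ^ i ≤ n} := by
  obtain ⟨b, d, hd3, rfl⟩ := Nat.exists_eq_pow_mul_and_not_dvd hd 3 (by norm_num)
  have he_shift : Orthonormal ℝ fun a => e (a + b) := he.comp _ (add_left_injective b)
  rw [sum_apply_mul_pow_mul hf n b hd3, he_shift.norm_sum_smul_sq, natCast_card_filter]
  refine sum_le_sum fun a _ => ?_
  rw [mul_pow, ← sq_abs (χ₃ d), abs_χ₃_of_not_dvd hd3, one_pow, one_mul]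
  exact sq_sum_Icc_div_pow_χ₃_le n a

end BorweinChoiCoons

/-- Vector-valued Borwein–Choi–Coons example: `f(3^a m) = χ₃(m) e_a` takes
values in the unit sphere and has discrepancy at most `√(log n / log 3 + 1)`. -/
theorem bcc_vector_valued {H : Type*} [NormedAddCommGroup H]
    [InnerProductSpace ℝ H] (e : ℕ → H) (he : Orthonormal ℝ e)
    (f : ℕ → H)
    (hf : ∀ a m : ℕ, 0 < m → ¬ (3 ∣ m) →
      f (3 ^ a * m) = (if m % 3 = 1 then (1 : ℝ) else -1) • e a) :
    (∀ n, 0 < n → ‖f n‖ = 1) ∧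
    ∀ n d : ℕ, 0 < n → 0 < d →
      ‖∑ j ∈ Finset.Icc 1 n, f (j * d)‖ ^ 2 ≤
        (((Finset.range (n + 1)).filter (fun i => 3 ^ i ≤ n)).card : ℝ) ∧
      (((Finset.range (n + 1)).filter (fun i => 3 ^ i ≤ n)).card : ℝ) ≤
        Real.log n / Real.log 3 + 1 := by
  have hχ₃ : ∀ a m, ¬ 3 ∣ m → f (3 ^ a * m) = χ₃ m • e a := fun a m hm => by
    rw [hf a m (Nat.pos_of_ne_zero fun h => hm (h ▸ dvd_zero 3)) hm, χ₃_eq_ite_of_not_dvd hm]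
  refine ⟨fun n hn => BorweinChoiCoons.norm_eq_one he hχ₃ hn.ne', fun n d hn hd => ⟨?_, ?_⟩⟩
  · exact BorweinChoiCoons.norm_sum_apply_mul_sq_le he hχ₃ n hd.ne'
  · simpa [Real.log_div_log] using
      Nat.card_filter_range_pow_le_le_logb (b := 3) (by norm_num) hn.ne'
end

section
/- With f as in the vector-valued Borwein–Choi–Coons example, for n_k = 1 + 3 + ⋯ + 3^k one has ∑_{j=1}^{n_k} f(j) = e_0 + e_1 + ⋯ + e_k, hence ‖∑_{j=1}^{n_k} f(j)‖ = √(k+1). Thus the discrepancy of f diverges like √(log n). -/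
/-!
Among `1, …, 3N + 1` the integers prime to `3` contribute `(∑ χ₃) • e₀ = e₀`, since
`χ₃` sums to zero over each full period and the last term is `χ₃(3N + 1) = 1`; the multiples
`3i` contribute `∑_{i ≤ N} f(3i)`, and `i ↦ f(3i)` is the same example with `e` shifted by one.
As `n_{k+1} = 3 n_k + 1`, induction on `k` gives `e₀ + ⋯ + e_k`, whose norm is `√(k+1)` by
orthonormality.
-/

open Finset

theorem Orthonormal.norm_sum_eq_sqrt_card {𝕜 E ι : Type*} [RCLike 𝕜] [NormedAddCommGroup E]
    [InnerProductSpace 𝕜 E] {e : ι → E} (he : Orthonormal 𝕜 e) (s : Finset ι) :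
    ‖∑ i ∈ s, e i‖ = Real.sqrt #s := by
  have h := he.inner_sum (fun _ => (1 : 𝕜)) (fun _ => 1) s
  simp only [one_smul, map_one, mul_one, sum_const, nsmul_eq_mul] at h
  rw [← Real.sqrt_sq (norm_nonneg _), ← @inner_self_eq_norm_sq 𝕜, h]
  simp

/-- `χ₃ m`, the nontrivial character mod `3`, for `m` prime to `3`. -/
def bccSign (m : ℕ) : ℝ := if m % 3 = 1 then 1 else -1

theorem sum_Icc_filter_not_dvd_bccSign (N : ℕ) :
    ∑ j ∈ Icc 1 (3 * N + 1) with ¬ 3 ∣ j, bccSign j = 1 := by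
  rw [sum_filter]
  induction N with
  | zero => simp [bccSign]
  | succ n ih =>
    rw [show 3 * (n + 1) + 1 = 3 * n + 1 + 1 + 1 + 1 by ring, sum_Icc_succ_top (by omega),
      sum_Icc_succ_top (by omega), sum_Icc_succ_top (by omega), ih]
    simp [bccSign, show (3 * n + 1 + 1) % 3 = 2 by omega, show 3 ∣ 3 * n + 1 + 1 + 1 by omega,
      show (3 * n + 1 + 1 + 1 + 1) % 3 = 1 by omega, show ¬ 3 ∣ 3 * n + 1 + 1 by omega,
      show ¬ 3 ∣ 3 * n + 1 + 1 + 1 + 1 by omega]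

theorem sum_Icc_eq_sum_filter_not_dvd_add_sum_three_mul {M : Type*} [AddCommMonoid M]
    (g : ℕ → M) (n : ℕ) :
    ∑ j ∈ Icc 1 n, g j = ∑ j ∈ Icc 1 n with ¬ 3 ∣ j, g j + ∑ i ∈ Icc 1 (n / 3), g (3 * i) := by
  rw [← sum_filter_not_add_sum_filter _ (3 ∣ ·)]
  congr 1
  have : {j ∈ Icc 1 n | 3 ∣ j} = (Icc 1 (n / 3)).map ⟨(3 * ·), mul_right_injective₀ three_ne_zero⟩ := by
    ext j
    simp only [mem_filter, mem_map, mem_Icc, Function.Embedding.coeFn_mk]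
    constructor
    · rintro ⟨⟨h1, h2⟩, c, rfl⟩
      exact ⟨c, ⟨by omega, by omega⟩, rfl⟩
    · rintro ⟨i, ⟨h1, h2⟩, rfl⟩
      exact ⟨⟨by omega, by omega⟩, i, rfl⟩
  rw [this, sum_map]
  rfl

section

variable {M : Type*} [AddCommGroup M] [Module ℝ M]

def IsBCC (e f : ℕ → M) : Prop :=
  ∀ a m : ℕ, 0 < m → ¬ 3 ∣ m → f (3 ^ a * m) = bccSign m • e a

theorem IsBCC.comp_three_mul {e f : ℕ → M} (hf : IsBCC e f) :
    IsBCC (fun a => e (a + 1)) (fun i => f (3 * i)) := by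
  intro a m hm h3
  simpa [← mul_assoc, ← pow_succ'] using hf (a + 1) m hm h3

theorem IsBCC.sum_Icc_three_mul_add_one {e f : ℕ → M} (hf : IsBCC e f) (N : ℕ) :
    ∑ j ∈ Icc 1 (3 * N + 1), f j = e 0 + ∑ i ∈ Icc 1 N, f (3 * i) := by
  have hcoprime : ∀ j ∈ {j ∈ Icc 1 (3 * N + 1) | ¬ 3 ∣ j}, f j = bccSign j • e 0 := by
    intro j hj
    simp only [mem_filter, mem_Icc] at hj
    simpa using hf 0 j (by omega) hj.2
  rw [sum_Icc_eq_sum_filter_not_dvd_add_sum_three_mul, sum_congr rfl hcoprime, ← sum_smul,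
    sum_Icc_filter_not_dvd_bccSign, one_smul, show (3 * N + 1) / 3 = N by omega]

theorem IsBCC.sum_Icc_geom_three {e f : ℕ → M} (hf : IsBCC e f) (k : ℕ) :
    ∑ j ∈ Icc 1 (∑ i ∈ range (k + 1), 3 ^ i), f j = ∑ a ∈ range (k + 1), e a := by
  induction k generalizing e f with
  | zero => simpa [bccSign] using hf 0 1 one_pos (by omega)
  | succ k ih =>
    rw [geom_sum_succ, hf.sum_Icc_three_mul_add_one, ih hf.comp_three_mul, sum_range_succ' e,
      add_comm]

end

/-- Vector-valued Borwein–Choi–Coons example, lower bound: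
`∑_{j=1}^{n_k} f(j) = e_0 + ⋯ + e_k`, which has norm `√(k+1)`. -/
theorem bcc_vector_valued_lower {H : Type*} [NormedAddCommGroup H]
    [InnerProductSpace ℝ H] (e : ℕ → H) (he : Orthonormal ℝ e)
    (f : ℕ → H)
    (hf : ∀ a m : ℕ, 0 < m → ¬ (3 ∣ m) →
      f (3 ^ a * m) = (if m % 3 = 1 then (1 : ℝ) else -1) • e a) :
    ∀ k : ℕ,
      (∑ j ∈ Finset.Icc 1 (∑ i ∈ Finset.range (k + 1), 3 ^ i), f j =
        ∑ a ∈ Finset.range (k + 1), e a) ∧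
      ‖∑ j ∈ Finset.Icc 1 (∑ i ∈ Finset.range (k + 1), 3 ^ i), f j‖ =
        Real.sqrt (k + 1) := by
  intro k
  have hsum : ∑ j ∈ Icc 1 (∑ i ∈ range (k + 1), 3 ^ i), f j = ∑ a ∈ range (k + 1), e a :=
    IsBCC.sum_Icc_geom_three hf k
  refine ⟨hsum, ?_⟩
  rw [hsum, he.norm_sum_eq_sqrt_card, card_range, Nat.cast_succ]
end

section
/- Let g : ℕ+ → S¹ be a random completely multiplicative function with g(n) = χ₃(n) for n coprime to 3 and g(3^j) = ε_j, where (ε_j) are i.i.d. uniform ±1 signs. Then for all n, d: E|∑_{j=1}^n g(jd)|² ≤ #{i ≥ 0 : 3^i ≤ n} ≪ log n. -/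
/-!
Write `j = 3^b m` and `d = 3^e d'` with `3 ∤ m, d'`. Then `g(jd) = χ₃(m) χ₃(d') ε_{b+e}`, and
since `χ₃` kills multiples of 3, `∑_{j ≤ n} g(jd) = ∑_{3^b ≤ n} c_b ε_{b+e}` with
`c_b = χ₃(d') ∑_{m ≤ n/3^b} χ₃(m)`. The signs `ε_j` are orthonormal in `L²` (`ε_0 = 1`, the others
are independent with mean zero), so the second moment is `∑ c_b²`, and `c_b² ≤ 1` because the
partial sums of `χ₃` are `0` or `1`.
-/

open MeasureTheory ProbabilityTheory Finset

noncomputable def chi3 (m : ℕ) : ℝ := if m % 3 = 1 then 1 else if m % 3 = 2 then -1 else 0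

lemma chi3_mul (a b : ℕ) : chi3 (a * b) = chi3 a * chi3 b := by
  have ha : a % 3 = 0 ∨ a % 3 = 1 ∨ a % 3 = 2 := by omega
  have hb : b % 3 = 0 ∨ b % 3 = 1 ∨ b % 3 = 2 := by omega
  simp only [chi3, Nat.mul_mod a b]
  rcases ha with ha | ha | ha <;> rcases hb with hb | hb | hb <;> simp [ha, hb]

lemma chi3_of_not_dvd {m : ℕ} (hm : ¬ 3 ∣ m) :
    chi3 m = if m % 3 = 1 then 1 else -1 := by
  have : m % 3 = 1 ∨ m % 3 = 2 := by omega
  rcases this with h | h <;> simp [chi3, h]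

lemma not_dvd_of_chi3_ne_zero {m : ℕ} (hm : chi3 m ≠ 0) : ¬ 3 ∣ m := by
  intro h
  simp [chi3, Nat.mod_eq_zero_of_dvd h] at hm

lemma sq_chi3_le_one (m : ℕ) : chi3 m ^ 2 ≤ 1 := by
  unfold chi3; split_ifs <;> norm_num

lemma sum_Icc_chi3 (N : ℕ) :
    ∑ m ∈ Icc 1 N, chi3 m = if N % 3 = 1 then 1 else 0 := by
  induction N with
  | zero => simp
  | succ N ih =>
    rw [sum_Icc_succ_top (by omega), ih]
    have : N % 3 = 0 ∨ N % 3 = 1 ∨ N % 3 = 2 := by omega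
    rcases this with h | h | h <;> simp [chi3, h, Nat.add_mod]

lemma sq_sum_Icc_chi3_le_one (N : ℕ) : (∑ m ∈ Icc 1 N, chi3 m) ^ 2 ≤ 1 := by
  rw [sum_Icc_chi3]; split_ifs <;> norm_num

lemma factorization_mem_filter_pow_le {p n j : ℕ} (hp : 1 < p) (hj : j ∈ Icc 1 n) :
    j.factorization p ∈ (range (n + 1)).filter (fun i => p ^ i ≤ n) := by
  obtain ⟨hj1, hjn⟩ := mem_Icc.mp hj
  have hle : p ^ j.factorization p ≤ n :=
    (Nat.le_of_dvd (by omega) (Nat.ordProj_dvd j p)).trans hjn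
  have hlt : j.factorization p < p ^ j.factorization p := Nat.lt_pow_self hp
  simp only [mem_filter, mem_range]
  exact ⟨by omega, hle⟩

lemma sum_filter_factorization_eq {M : Type*} [AddCommMonoid M] {p : ℕ} (hp : p.Prime)
    (n b : ℕ) (F : ℕ → M) :
    ∑ j ∈ (Icc 1 n).filter (fun j => j.factorization p = b), F j =
      ∑ m ∈ (Icc 1 (n / p ^ b)).filter (fun m => ¬ p ∣ m), F (p ^ b * m) := by
  have hpb : 0 < p ^ b := pow_pos hp.pos b
  symm
  refine sum_nbij' (fun m => p ^ b * m) (fun j => j / p ^ b) ?_ ?_ ?_ ?_ (fun _ _ => rfl)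
  · intro m hm
    simp only [mem_filter, mem_Icc] at hm ⊢
    obtain ⟨⟨hm1, hmn⟩, hpm⟩ := hm
    refine ⟨⟨Nat.mul_pos hpb hm1, ?_⟩, ?_⟩
    · rw [mul_comm]; exact (Nat.le_div_iff_mul_le hpb).mp hmn
    · rw [Nat.factorization_mul hpb.ne' (by omega), hp.factorization_pow]
      simp [Nat.factorization_eq_zero_of_not_dvd hpm]
  · intro j hj
    simp only [mem_filter, mem_Icc] at hj ⊢
    obtain ⟨⟨hj1, hjn⟩, rfl⟩ := hj
    refine ⟨⟨(Nat.one_le_div_iff hpb).mpr (Nat.le_of_dvd hj1 (Nat.ordProj_dvd j p)),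
      Nat.div_le_div_right hjn⟩, Nat.not_dvd_ordCompl hp (by omega)⟩
  · intro m _
    exact Nat.mul_div_cancel_left m hpb
  · intro j hj
    simp only [mem_filter, mem_Icc] at hj
    rw [← hj.2]
    exact Nat.mul_div_cancel' (Nat.ordProj_dvd j p)

lemma sum_Icc_eq_sum_pow_mul {M : Type*} [AddCommMonoid M] {p : ℕ} (hp : p.Prime)
    (n : ℕ) (F : ℕ → M) :
    ∑ j ∈ Icc 1 n, F j = ∑ b ∈ (range (n + 1)).filter (fun i => p ^ i ≤ n),
      ∑ m ∈ (Icc 1 (n / p ^ b)).filter (fun m => ¬ p ∣ m), F (p ^ b * m) := by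
  rw [← sum_fiberwise_of_maps_to (fun j hj => factorization_mem_filter_pow_le hp.one_lt hj)]
  exact sum_congr rfl fun b _ => sum_filter_factorization_eq hp n b F

lemma card_filter_pow_le_le_logb {p : ℕ} (hp : 1 < p) (n : ℕ) :
    (((range (n + 1)).filter (fun i => p ^ i ≤ n)).card : ℝ) ≤ Real.logb p n + 1 := by
  have hsub : (range (n + 1)).filter (fun i => p ^ i ≤ n) ⊆ range (Nat.log p n + 1) :=
    fun i hi => mem_range.mpr (Nat.lt_succ_of_le (Nat.le_log_of_pow_le hp (mem_filter.mp hi).2))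
  calc (((range (n + 1)).filter (fun i => p ^ i ≤ n)).card : ℝ)
      ≤ Nat.log p n + 1 := by exact_mod_cast (card_le_card hsub).trans (card_range _).le
    _ ≤ Real.logb p n + 1 := by gcongr; exact Real.natLog_le_logb n p
lemma sum_Icc_mul_eq_sum_chi3 (g ε : ℕ → ℝ)
    (hg : ∀ a m : ℕ, 0 < m → ¬ 3 ∣ m → g (3 ^ a * m) = chi3 m * ε a) (n : ℕ) {d : ℕ}
    (hd : d ≠ 0) :
    ∑ j ∈ Icc 1 n, g (j * d) = ∑ b ∈ (range (n + 1)).filter (fun i => 3 ^ i ≤ n),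
      (chi3 (ordCompl[3] d) * ∑ m ∈ Icc 1 (n / 3 ^ b), chi3 m) * ε (b + d.factorization 3) := by
  have hd3 : ¬ 3 ∣ ordCompl[3] d := Nat.not_dvd_ordCompl Nat.prime_three hd
  rw [sum_Icc_eq_sum_pow_mul Nat.prime_three]
  refine sum_congr rfl fun b _ => ?_
  rw [← sum_filter_of_ne fun m _ => not_dvd_of_chi3_ne_zero, mul_sum, sum_mul]
  refine sum_congr rfl fun m hm => ?_
  obtain ⟨hm1, hm3⟩ := (mem_filter.mp hm).imp_left fun h => (mem_Icc.mp h).1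
  have hsplit : 3 ^ b * m * d = 3 ^ (b + d.factorization 3) * (m * ordCompl[3] d) := by
    conv_lhs => rw [← Nat.ordProj_mul_ordCompl_eq_self d 3]
    ring
  rw [hsplit, hg _ _ (Nat.mul_pos hm1 (Nat.ordCompl_pos 3 hd))
    (Nat.prime_three.not_dvd_mul hm3 hd3), chi3_mul]
  ring

section L2

variable {Ω : Type*} [MeasurableSpace Ω] {μ : Measure Ω}

lemma integral_eq_zero_of_sign [IsProbabilityMeasure μ] {X : Ω → ℝ} (hX : Measurable X)
    (hsign : ∀ ω, X ω = 1 ∨ X ω = -1) (hhalf : μ {ω | X ω = 1} = 2⁻¹) :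
    ∫ ω, X ω ∂μ = 0 := by
  set A := {ω | X ω = 1}
  have hA : MeasurableSet A := hX (measurableSet_singleton 1)
  have hrepr : X = fun ω => 2 * A.indicator 1 ω - 1 := by
    funext ω
    by_cases h : ω ∈ A
    · simp [Set.indicator_of_mem h, show X ω = 1 from h]; norm_num
    · simp [Set.indicator_of_notMem h, (hsign ω).resolve_left h]
  rw [hrepr, integral_sub ((integrable_indicator_iff hA).mpr (integrable_const 1).integrableOn
      |>.const_mul 2) (integrable_const 1), integral_const_mul, integral_indicator_one hA,
    measureReal_def, hhalf]
  simp

lemma integrable_mul_of_sign [IsFiniteMeasure μ] {X Y : Ω → ℝ} (hX : Measurable X)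
    (hY : Measurable Y) (hXsign : ∀ ω, X ω = 1 ∨ X ω = -1)
    (hYsign : ∀ ω, Y ω = 1 ∨ Y ω = -1) :
    Integrable (fun ω => X ω * Y ω) μ :=
  .of_bound (hX.mul hY).aestronglyMeasurable 1 <| .of_forall fun ω => by
    rcases hXsign ω with h | h <;> rcases hYsign ω with h' | h' <;> simp [h, h']

lemma integral_mul_eq_ite_of_sign [IsProbabilityMeasure μ] {ε : ℕ → Ω → ℝ}
    (hmeas : ∀ j, Measurable (ε j))
    (hsign : ∀ j ω, ε j ω = 1 ∨ ε j ω = -1) (hmean : ∀ j, 1 ≤ j → ∫ ω, ε j ω ∂μ = 0)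
    (hindep : iIndepFun ε μ) (s t : ℕ) :
    ∫ ω, ε s ω * ε t ω ∂μ = if s = t then 1 else 0 := by
  split_ifs with hst
  · subst hst
    have hone : (fun ω => ε s ω * ε s ω) = fun _ => 1 := funext fun ω => by
      rcases hsign s ω with h | h <;> simp [h]
    simp [hone]
  · have hprod := (hindep.indepFun hst).integral_mul_eq_mul_integral
      (hmeas s).aestronglyMeasurable (hmeas t).aestronglyMeasurable
    simp only [Pi.mul_apply] at hprod
    rw [hprod]
    rcases Nat.eq_zero_or_pos s with rfl | hs
    · rw [hmean t (by omega), mul_zero]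
    · rw [hmean s hs, zero_mul]

lemma integral_sq_sum_of_orthonormal {ι : Type*} [DecidableEq ι] (X : ι → Ω → ℝ) (s : Finset ι)
    (c : ι → ℝ)
    (hint : ∀ i j, Integrable (fun ω => X i ω * X j ω) μ)
    (horth : ∀ i j, ∫ ω, X i ω * X j ω ∂μ = if i = j then 1 else 0) :
    ∫ ω, (∑ i ∈ s, c i * X i ω) ^ 2 ∂μ = ∑ i ∈ s, c i ^ 2 := by
  have hexpand : ∀ ω, (∑ i ∈ s, c i * X i ω) ^ 2 =
      ∑ i ∈ s, ∑ j ∈ s, c i * c j * (X i ω * X j ω) := fun ω => by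
    rw [sq, sum_mul_sum]
    exact sum_congr rfl fun i _ => sum_congr rfl fun j _ => by ring
  simp_rw [hexpand]
  rw [integral_finsetSum _ fun i _ => integrable_finsetSum _ fun j _ => (hint i j).const_mul _]
  refine sum_congr rfl fun i hi => ?_
  rw [integral_finsetSum _ fun j _ => (hint i j).const_mul _]
  simp_rw [integral_const_mul, horth, mul_ite, mul_one, mul_zero, sum_ite_eq, if_pos hi, sq]

end L2

/-- Random Borwein–Choi–Coons example: with `g(3^a m) = χ₃(m) ε_a` for
`gcd(m,3)=1`, where the `ε_j` (`j ≥ 1`) are i.i.d. uniform ±1 signs,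
one has `E|∑_{j=1}^n g(jd)|² ≤ #{i : 3^i ≤ n} ≪ log n`. -/
theorem bcc_random {Ω : Type*} [MeasureSpace Ω]
    [IsProbabilityMeasure (ℙ : Measure Ω)]
    (ε : ℕ → Ω → ℝ) (hmeas : ∀ j, Measurable (ε j))
    (hε0 : ∀ ω, ε 0 ω = 1)
    (hεval : ∀ j, 1 ≤ j → ∀ ω, ε j ω = 1 ∨ ε j ω = -1)
    (hεdist : ∀ j, 1 ≤ j → ℙ {ω | ε j ω = 1} = (2 : ENNReal)⁻¹)
    (hindep : iIndepFun ε ℙ)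
    (g : Ω → ℕ → ℝ)
    (hg : ∀ ω, ∀ a m : ℕ, 0 < m → ¬ (3 ∣ m) →
      g ω (3 ^ a * m) = (if m % 3 = 1 then (1 : ℝ) else -1) * ε a ω) :
    ∀ n d : ℕ, 0 < n → 0 < d →
      (∫ ω, (∑ j ∈ Finset.Icc 1 n, g ω (j * d)) ^ 2) ≤
        (((Finset.range (n + 1)).filter (fun i => 3 ^ i ≤ n)).card : ℝ) ∧
      (((Finset.range (n + 1)).filter (fun i => 3 ^ i ≤ n)).card : ℝ) ≤
        Real.log n / Real.log 3 + 1 := by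
  intro n d _ hd
  refine ⟨?_, by simpa [Real.logb] using card_filter_pow_le_le_logb (p := 3) (by norm_num) n⟩
  have hsign : ∀ j ω, ε j ω = 1 ∨ ε j ω = -1 := fun j ω => by
    rcases Nat.eq_zero_or_pos j with rfl | hj
    · exact .inl (hε0 ω)
    · exact hεval j hj ω
  have hmean : ∀ j, 1 ≤ j → ∫ ω, ε j ω = 0 := fun j hj =>
    integral_eq_zero_of_sign (hmeas j) (hεval j hj) (hεdist j hj)
  have hsum : ∀ ω, ∑ j ∈ Icc 1 n, g ω (j * d) = ∑ b ∈ (range (n + 1)).filter (3 ^ · ≤ n),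
      (chi3 (ordCompl[3] d) * ∑ m ∈ Icc 1 (n / 3 ^ b), chi3 m) * ε (b + d.factorization 3) ω :=
    fun ω => sum_Icc_mul_eq_sum_chi3 (g ω) (ε · ω)
      (fun a m hm h3 => by rw [hg ω a m hm h3, chi3_of_not_dvd h3]) n hd.ne'
  simp_rw [hsum]
  rw [integral_sq_sum_of_orthonormal (fun b => ε (b + d.factorization 3)) _ _
    (fun i j => integrable_mul_of_sign (hmeas _) (hmeas _) (hsign _) (hsign _))
    (fun i j => by simp [integral_mul_eq_ite_of_sign hmeas hsign hmean hindep])]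
  calc ∑ b ∈ (range (n + 1)).filter (3 ^ · ≤ n),
        (chi3 (ordCompl[3] d) * ∑ m ∈ Icc 1 (n / 3 ^ b), chi3 m) ^ 2
      ≤ ∑ b ∈ (range (n + 1)).filter (3 ^ · ≤ n), (1 : ℝ) := by
        refine sum_le_sum fun b _ => ?_
        rw [mul_pow]
        exact mul_le_one₀ (sq_chi3_le_one _) (sq_nonneg _) (sq_sum_Icc_chi3_le_one _)
    _ = _ := by simp
end

section
/- Define f : ℕ+ → {-1,+1} recursively by f(1) = 1 and f(jD! + k) = (-1)^j f(k) for each D ≥ 1, k = 1,…,D!, j = 1,…,D. Then for every fixed d ≥ 1, sup_n |∑_{j=1}^n f(jd)| < ∞. -/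
/-!
Write `L = (D + 1)! / d` for an odd `D ≥ d`. Unfolding the recursion,
`f (m (D + 1)! + k) = ± f k` for `k ≤ (D + 1)!`, so every block
`f ((mL + 1) d), …, f ((mL + L) d)` is a signed copy of the first one. The first block splits into
`D + 1` sub-blocks of length `D! / d` carrying the signs `(-1)^0, …, (-1)^D`, which cancel since
`D + 1` is even. Hence all blocks sum to zero and the partial sums along the multiples of `d` are
bounded by `L`.
-/

open Finset Nat

theorem Finset.sum_range_mul_eq_sum_sum {M : Type*} [AddCommMonoid M] (g : ℕ → M) (a b : ℕ) :
    ∑ s ∈ range (a * b), g s = ∑ i ∈ range a, ∑ j ∈ range b, g (i * b + j) := by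
  induction a with
  | zero => simp
  | succ a ih => rw [add_mul, one_mul, sum_range_add, ih, sum_range_succ]

theorem abs_sum_range_le_of_sum_block_eq_zero {α : Type*} [AddCommGroup α] [LinearOrder α]
    [IsOrderedAddMonoid α] {g : ℕ → α} {L : ℕ} {C : α} (hL : 0 < L)
    (hg : ∀ s, |g s| ≤ C)
    (hblock : ∀ m, ∑ s ∈ range L, g (m * L + s) = 0) (n : ℕ) :
    |∑ s ∈ range n, g s| ≤ L • C := by
  have hC : 0 ≤ C := (abs_nonneg _).trans (hg 0)
  rw [← Nat.div_add_mod' n L, sum_range_add, sum_range_mul_eq_sum_sum,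
    sum_eq_zero fun m _ => hblock m, zero_add]
  calc |∑ s ∈ range (n % L), g (n / L * L + s)|
      ≤ ∑ s ∈ range (n % L), |g (n / L * L + s)| := abs_sum_le_sum_abs _ _
    _ ≤ (n % L) • C := (sum_le_sum fun s _ => hg _).trans (by rw [sum_const, card_range])
    _ ≤ L • C := nsmul_le_nsmul_left hC (Nat.mod_lt n hL).le

def FactorialRecursion {R : Type*} [Ring R] (f : ℕ → R) : Prop :=
  ∀ D : ℕ, 1 ≤ D → ∀ j ∈ Icc 1 D, ∀ k ∈ Icc 1 D !, f (j * D ! + k) = (-1) ^ j * f k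

namespace FactorialRecursion

variable {R : Type*} [Ring R] {f : ℕ → R}

theorem apply_mul_factorial_add (hf : FactorialRecursion f) {D j k : ℕ} (hj : j ≤ D)
    (hk : k ∈ Icc 1 D !) : f (j * D ! + k) = (-1) ^ j * f k := by
  rcases j.eq_zero_or_pos with rfl | hj0
  · simp
  · exact hf D (hj0.trans_le hj) j (mem_Icc.2 ⟨hj0, hj⟩) k hk

/-- The step `E → E + 1` splits `m F!` as `j E! + r F!` with `j ≤ E` and `r F! < E!`. -/
theorem exists_apply_mul_factorial_add_of_lt (hf : FactorialRecursion f) {F E m : ℕ}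
    (hFE : F ≤ E) (hm : m * F ! < E !) :
    ∃ ε : R, ∀ k ∈ Icc 1 F !, f (m * F ! + k) = ε * f k := by
  induction E, hFE using Nat.le_induction generalizing m with
  | base =>
    obtain rfl : m = 0 :=
      Nat.lt_one_iff.1 (Nat.lt_of_mul_lt_mul_right (a := F !) (by rwa [one_mul]))
    exact ⟨1, fun k _ => by simp⟩
  | succ E hFE ih =>
    obtain ⟨q, hq⟩ := Nat.factorial_dvd_factorial hFE
    have hq0 : 0 < q := Nat.pos_of_mul_pos_left (hq ▸ E.factorial_pos)
    have hj : m / q ≤ E := by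
      refine Nat.lt_succ_iff.1 ((Nat.div_lt_iff_lt_mul hq0).2 ?_)
      refine Nat.lt_of_mul_lt_mul_right (a := F !) ?_
      rwa [Nat.factorial_succ, hq, ← mul_assoc, mul_right_comm] at hm
    have hr : m % q * F ! < E ! := by
      rw [hq, mul_comm]
      exact Nat.mul_lt_mul_of_pos_left (Nat.mod_lt m hq0) F.factorial_pos
    obtain ⟨ε, hε⟩ := ih hr
    refine ⟨(-1) ^ (m / q) * ε, fun k hk => ?_⟩
    have hsplit : m * F ! + k = m / q * E ! + (m % q * F ! + k) := by
      conv_lhs => rw [← Nat.div_add_mod' m q]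
      rw [hq]
      ring
    have hk' : m % q * F ! + k ∈ Icc 1 E ! := by
      obtain ⟨hk1, hk2⟩ := mem_Icc.1 hk
      refine mem_Icc.2 ⟨by omega, ?_⟩
      calc m % q * F ! + k ≤ (m % q + 1) * F ! := by rw [add_mul, one_mul]; omega
        _ ≤ q * F ! := Nat.mul_le_mul_right _ (Nat.mod_lt m hq0)
        _ = E ! := by rw [hq, mul_comm]
    rw [hsplit, hf.apply_mul_factorial_add hj hk', hε k hk, mul_assoc]

theorem exists_apply_mul_factorial_add (hf : FactorialRecursion f) (F m : ℕ) :
    ∃ ε : R, ∀ k ∈ Icc 1 F !, f (m * F ! + k) = ε * f k :=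
  hf.exists_apply_mul_factorial_add_of_lt (E := m * F ! + F + 1) (by omega)
    ((Nat.lt_succ_of_le (Nat.le_add_right _ F)).trans_le (Nat.self_le_factorial _))

theorem sum_range_succ_mul_eq_zero (hf : FactorialRecursion f) {D d t : ℕ} (hD : Odd D)
    (hdt : t * d = D !) : ∑ s ∈ range ((D + 1) * t), f ((s + 1) * d) = 0 := by
  have hd : 0 < d := Nat.pos_of_mul_pos_left (hdt ▸ D.factorial_pos)
  have hsub : ∀ n ∈ range (D + 1), ∑ s ∈ range t, f ((n * t + s + 1) * d) =
      (-1) ^ n * ∑ s ∈ range t, f ((s + 1) * d) := by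
    intro n hn
    rw [mul_sum]
    refine sum_congr rfl fun s hs => ?_
    have hk : (s + 1) * d ∈ Icc 1 D ! := mem_Icc.2 ⟨Nat.one_le_iff_ne_zero.2 (by positivity),
      hdt ▸ Nat.mul_le_mul_right d (mem_range.1 hs)⟩
    rw [show (n * t + s + 1) * d = n * D ! + (s + 1) * d by rw [← hdt]; ring,
      hf.apply_mul_factorial_add (Nat.lt_succ_iff.1 (mem_range.1 hn)) hk]
  rw [sum_range_mul_eq_sum_sum, sum_congr rfl hsub, ← sum_mul, neg_one_geom_sum,
    if_pos hD.add_one, zero_mul]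

theorem sum_block_eq_zero (hf : FactorialRecursion f) {D d t : ℕ} (hD : Odd D)
    (hdt : t * d = D !) (m : ℕ) :
    ∑ s ∈ range ((D + 1) * t), f ((m * ((D + 1) * t) + s + 1) * d) = 0 := by
  obtain ⟨ε, hε⟩ := hf.exists_apply_mul_factorial_add (D + 1) m
  have hd : 0 < d := Nat.pos_of_mul_pos_left (hdt ▸ D.factorial_pos)
  have hshift : ∀ s ∈ range ((D + 1) * t),
      f ((m * ((D + 1) * t) + s + 1) * d) = ε * f ((s + 1) * d) := by
    intro s hs
    have hk : (s + 1) * d ∈ Icc 1 (D + 1)! := by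
      refine mem_Icc.2 ⟨Nat.one_le_iff_ne_zero.2 (by positivity), ?_⟩
      rw [Nat.factorial_succ, ← hdt, ← mul_assoc]
      exact Nat.mul_le_mul_right d (mem_range.1 hs)
    rw [← hε _ hk, Nat.factorial_succ, ← hdt]
    ring_nf
  rw [sum_congr rfl hshift, ← mul_sum, hf.sum_range_succ_mul_eq_zero hD hdt, mul_zero]

end FactorialRecursion

theorem factorial_sequence_bounded_on_multiples_general (f : ℕ → ℤ)
    (hval : ∀ n, 0 < n → f n = 1 ∨ f n = -1)
    (hrec : ∀ D : ℕ, 1 ≤ D → ∀ j ∈ Finset.Icc 1 D,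
      ∀ k ∈ Finset.Icc 1 (Nat.factorial D),
        f (j * Nat.factorial D + k) = (-1) ^ j * f k) :
    ∀ d : ℕ, 0 < d → ∃ B : ℤ, ∀ n : ℕ,
      |∑ j ∈ Finset.Icc 1 n, f (j * d)| ≤ B := by
  intro d hd
  obtain ⟨t, hdt⟩ := Nat.dvd_factorial hd (by omega : d ≤ 2 * d + 1)
  have hL : 0 < (2 * d + 1 + 1) * t :=
    Nat.mul_pos (by omega) (Nat.pos_of_mul_pos_left (hdt ▸ (2 * d + 1).factorial_pos))
  have hbound : ∀ s, |f ((s + 1) * d)| ≤ 1 := fun s => by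
    rcases hval ((s + 1) * d) (by positivity) with h | h <;> simp [h]
  refine ⟨((2 * d + 1 + 1) * t : ℕ) • 1, fun n => ?_⟩
  rw [← Ico_add_one_right_eq_Icc, ← zero_add 1, ← sum_Ico_add' (fun j => f (j * d)),
    ← range_eq_Ico]
  exact abs_sum_range_le_of_sum_block_eq_zero hL hbound
    (FactorialRecursion.sum_block_eq_zero hrec (odd_two_mul_add_one d) (by rw [hdt, mul_comm])) n

/-- The sequence defined by `f(1) = 1` and `f(jD! + k) = (-1)^j f(k)` has
bounded partial sums along the multiples of each fixed `d`. -/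
theorem factorial_sequence_bounded_on_multiples (f : ℕ → ℤ)
    (h1 : f 1 = 1)
    (hval : ∀ n, 0 < n → f n = 1 ∨ f n = -1)
    (hrec : ∀ D : ℕ, 1 ≤ D → ∀ j ∈ Finset.Icc 1 D,
      ∀ k ∈ Finset.Icc 1 (Nat.factorial D),
        f (j * Nat.factorial D + k) = (-1) ^ j * f k) :
    ∀ d : ℕ, 0 < d → ∃ B : ℤ, ∀ n : ℕ,
      |∑ j ∈ Finset.Icc 1 n, f (j * d)| ≤ B :=
  factorial_sequence_bounded_on_multiples_general f hval hrec
end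

section
/- Let (Ω, μ) be a probability space and g : Ω → (S¹)^ℕ measurable with g(ω) completely multiplicative for μ-a.e. ω. If sup_n ∫_Ω |∑_{j=1}^n g(ω)(j)|² dμ(ω) ≤ C² < ∞, then setting f(n) := (ω ↦ g(ω)(n)) ∈ L²(Ω, μ), f takes values in the unit sphere of L²(Ω,μ) and has discrepancy at most C. -/
/-!
Almost surely `g(ω)` is completely multiplicative with `|g(ω)(d)| = 1`, so
`∑_{j ≤ n} g(ω)(jd) = g(ω)(d) ∑_{j ≤ n} g(ω)(j)` has the same modulus as the
undilated sum: the integrands for the dilation `d` and for `d = 1` agree almost everywhere.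
-/

open MeasureTheory Finset

theorem sum_Icc_mul_right_eq_sum_mul_of_map_mul {R : Type*} [CommSemiring R] {f : ℕ → R}
    (hf : ∀ m n, 0 < m → 0 < n → f (m * n) = f m * f n) {d : ℕ} (hd : 0 < d) (n : ℕ) :
    ∑ j ∈ Icc 1 n, f (j * d) = (∑ j ∈ Icc 1 n, f j) * f d := by
  rw [sum_mul]
  exact sum_congr rfl fun j hj => hf j d (mem_Icc.mp hj).1 hd

theorem norm_sum_Icc_mul_right_of_map_mul {R : Type*} [SeminormedCommRing R] [NormMulClass R]
    {f : ℕ → R} (hf : ∀ m n, 0 < m → 0 < n → f (m * n) = f m * f n) {d : ℕ} (hd : 0 < d)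
    (hfd : ‖f d‖ = 1) (n : ℕ) :
    ‖∑ j ∈ Icc 1 n, f (j * d)‖ = ‖∑ j ∈ Icc 1 n, f j‖ := by
  rw [sum_Icc_mul_right_eq_sum_mul_of_map_mul hf hd, norm_mul, hfd, mul_one]

theorem integral_norm_sq_eq_one_of_ae_norm_eq_one {Ω E : Type*} [MeasurableSpace Ω]
    {μ : Measure Ω} [IsProbabilityMeasure μ] [NormedAddCommGroup E] {F : Ω → E}
    (hF : ∀ᵐ ω ∂μ, ‖F ω‖ = 1) :
    ∫ ω, ‖F ω‖ ^ 2 ∂μ = 1 := by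
  calc ∫ ω, ‖F ω‖ ^ 2 ∂μ = ∫ _, (1 : ℝ) ∂μ :=
        integral_congr_ae (hF.mono fun ω hω => by simp only [hω, one_pow])
    _ = 1 := by simp

theorem measure_theoretic_bounded_discrepancy_general {Ω : Type*} [MeasurableSpace Ω]
    (μ : Measure Ω) [IsProbabilityMeasure μ]
    (g : Ω → ℕ → ℂ)
    (hmul : ∀ᵐ ω ∂μ, (∀ n, 0 < n → ‖g ω n‖ = 1) ∧
      ∀ m n, 0 < m → 0 < n → g ω (m * n) = g ω m * g ω n)
    (C : ℝ)
    (hbd : ∀ n : ℕ,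
      (∫ ω, ‖∑ j ∈ Finset.Icc 1 n, g ω j‖ ^ 2 ∂μ) ≤ C ^ 2) :
    (∀ n, 0 < n → (∫ ω, ‖g ω n‖ ^ 2 ∂μ) = 1) ∧
    ∀ n d : ℕ, 0 < n → 0 < d →
      (∫ ω, ‖∑ j ∈ Finset.Icc 1 n, g ω (j * d)‖ ^ 2 ∂μ) ≤ C ^ 2 := by
  refine ⟨fun n hn => integral_norm_sq_eq_one_of_ae_norm_eq_one
    (hmul.mono fun ω hω => hω.1 n hn), fun n d _ hd => ?_⟩
  have hdilate : (fun ω => ‖∑ j ∈ Icc 1 n, g ω (j * d)‖ ^ 2) =ᵐ[μ]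
      fun ω => ‖∑ j ∈ Icc 1 n, g ω j‖ ^ 2 :=
    hmul.mono fun ω hω =>
      congrArg (· ^ 2) (norm_sum_Icc_mul_right_of_map_mul hω.2 hd (hω.1 d hd) n)
  exact (integral_congr_ae hdilate).trans_le (hbd n)

/-- If a measurable family `g(ω)` of completely multiplicative `S¹`-valued
functions has `∫ |∑_{j≤n} g(ω)(j)|² dμ ≤ C²` for all `n`, then the associated
`L²`-valued sequence `f(n) = (ω ↦ g(ω)(n))` takes values in the unit sphere
of `L²(Ω,μ)` and has discrepancy at most `C`. -/
theorem measure_theoretic_bounded_discrepancy {Ω : Type*} [MeasurableSpace Ω]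
    (μ : Measure Ω) [IsProbabilityMeasure μ]
    (g : Ω → ℕ → ℂ) (hmeas : Measurable g)
    (hmul : ∀ᵐ ω ∂μ, (∀ n, 0 < n → ‖g ω n‖ = 1) ∧
      ∀ m n, 0 < m → 0 < n → g ω (m * n) = g ω m * g ω n)
    (C : ℝ) (hC : 0 ≤ C)
    (hbd : ∀ n : ℕ,
      (∫ ω, ‖∑ j ∈ Finset.Icc 1 n, g ω j‖ ^ 2 ∂μ) ≤ C ^ 2) :
    (∀ n, 0 < n → (∫ ω, ‖g ω n‖ ^ 2 ∂μ) = 1) ∧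
    ∀ n d : ℕ, 0 < n → 0 < d →
      (∫ ω, ‖∑ j ∈ Finset.Icc 1 n, g ω (j * d)‖ ^ 2 ∂μ) ≤ C ^ 2 :=
  measure_theoretic_bounded_discrepancy_general μ g hmul C hbd
end

section
/- Let q ≥ 1, k ≥ 1, let χ be a primitive Dirichlet character mod q, and let d₁ ≠ d₂ be divisors of q^{k-1}. Then for any integers m₁, m₂, ∑_{a=1}^{q^k} 1_{d₁ ∣ a+m₁} 1_{d₂ ∣ a+m₂} χ((a+m₁)/d₁) · conj(χ((a+m₂)/d₂)) = 0. -/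
/-!
Let `p` be a prime at which the valuations of `d ≠ d'` differ, say `v_p(d') < v_p(d)`, and let
`w` be the prime-to-`p` part of `d'`. Shifting `a` by `H = d w (q / p)` leaves
`1_{d' ∣ a + m'} χ((a + m') / d')` unchanged, because `d' q ∣ H`, while it moves `(a + m) / d`
by `w (q / p)`. Averaging the sum over `p` consecutive shifts by `H` therefore kills it, since a
primitive character sums to zero along every progression `x + t (q / p)`, `t < p`: multiplication
by a unit `u ≡ 1 (mod q / p)` with `χ u ≠ 1` permutes such a progression.
-/

open Finset Function

namespace Function.Periodic

variable {M : Type*} [AddCommMonoid M] {f : ℕ → M} {N : ℕ}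

theorem sum_Ico_eq_sum_range (hf : Periodic f N) (n : ℕ) :
    ∑ a ∈ Ico n (n + N), f a = ∑ a ∈ range N, f a := by
  rw [← Nat.image_Ico_mod n N, sum_image (Nat.mod_injOn_Ico n N)]
  exact sum_congr rfl fun a _ => (hf.map_mod_nat a).symm

theorem sum_range_add (hf : Periodic f N) (c : ℕ) :
    ∑ a ∈ range N, f (a + c) = ∑ a ∈ range N, f a :=
  calc ∑ a ∈ range N, f (a + c) = ∑ a ∈ Ico c (c + N), f a := by
        rw [Finset.sum_Ico_eq_sum_range, add_tsub_cancel_left]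
        exact sum_congr rfl fun a _ => by rw [add_comm]
    _ = ∑ a ∈ range N, f a := hf.sum_Ico_eq_sum_range c

theorem sum_range_mul_of_coprime (hf : Periodic f N) {w : ℕ} (hw : w.Coprime N) :
    ∑ a ∈ range N, f (a * w) = ∑ a ∈ range N, f a := by
  have hmaps : ∀ a ∈ range N, a * w % N ∈ range N := fun a ha =>
    mem_range.mpr (Nat.mod_lt _ (Nat.zero_lt_of_lt (mem_range.mp ha)))
  have hinj : Set.InjOn (fun a => a * w % N) (range N) := fun a ha b hb hab =>
    (Nat.ModEq.cancel_right_of_coprime (Nat.coprime_comm.mp hw) hab).eq_of_lt_of_lt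
      (mem_range.mp ha) (mem_range.mp hb)
  calc ∑ a ∈ range N, f (a * w) = ∑ a ∈ range N, f (a * w % N) :=
        sum_congr rfl fun a _ => (hf.map_mod_nat _).symm
    _ = ∑ a ∈ (range N).image (fun a => a * w % N), f a := (sum_image hinj).symm
    _ = ∑ a ∈ range N, f a := by
        rw [eq_of_subset_of_card_le (image_subset_iff.mpr hmaps) (card_image_of_injOn hinj).ge]

end Function.Periodic

theorem sum_range_mul_eq_zero_of_sum_shifts_eq_zero {R : Type*} [CommSemiring R]
    [IsAddTorsionFree R] {F G : ℕ → R} {N H p : ℕ} (hp : p ≠ 0)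
    (hFG : Periodic (fun a => F a * G a) N) (hG : Periodic G H)
    (hF : ∀ a, ∑ t ∈ range p, F (a + t * H) = 0) :
    ∑ a ∈ range N, F a * G a = 0 := by
  have hshift : ∀ t, ∑ a ∈ range N, F (a + t * H) * G a = ∑ a ∈ range N, F a * G a := fun t => by
    have hGt : ∀ a, G (a + t * H) = G a := hG.nat_mul t
    simpa only [hGt] using hFG.sum_range_add (t * H)
  have : p • ∑ a ∈ range N, F a * G a = 0 := by
    rw [← card_range p, ← sum_const, ← sum_congr rfl fun t _ => hshift t, sum_comm]
    simp [← sum_mul, hF]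
  exact (nsmul_eq_zero_iff_right hp).mp this

theorem Nat.mul_dvd_pow_of_dvd_pow_sub_one {d q k : ℕ} (hk : k ≠ 0) (hd : d ∣ q ^ (k - 1)) :
    d * q ∣ q ^ k :=
  pow_sub_one_mul hk q ▸ Nat.mul_dvd_mul_right hd q

theorem ZMod.exists_eq_natCast_mul_of_castHom_eq_zero {q c : ℕ} [NeZero q] (hc : c ∣ q)
    {z : ZMod q} (hz : ZMod.castHom hc (ZMod c) z = 0) : ∃ s : ℕ, z = s * c := by
  have hdvd : c ∣ z.val := by
    rwa [← ZMod.natCast_eq_zero_iff, ← map_natCast (ZMod.castHom hc (ZMod c)), ZMod.natCast_val,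
      ZMod.cast_id]
  obtain ⟨s, hs⟩ := hdvd
  exact ⟨s, by rw [← ZMod.natCast_zmod_val z, hs, Nat.cast_mul, mul_comm]⟩

namespace DirichletCharacter

section CommMonoidWithZero

variable {R : Type*} [CommMonoidWithZero R] {q : ℕ} (χ : DirichletCharacter R q) {d n H : ℕ}

def dilate (d n : ℕ) : R := if d ∣ n then χ (n / d : ℕ) else 0

theorem dilate_add_of_dvd (hn : d ∣ n) (hH : d ∣ H) :
    χ.dilate d (n + H) = χ ((n / d : ℕ) + (H / d : ℕ)) := by
  rw [dilate, if_pos (hn.add hH), Nat.add_div_of_dvd_right hn, Nat.cast_add]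

theorem dilate_add_of_not_dvd (hn : ¬ d ∣ n) (hH : d ∣ H) : χ.dilate d (n + H) = 0 :=
  if_neg fun h => hn ((Nat.dvd_add_left hH).mp h)

theorem periodic_dilate (h : d * q ∣ H) : Periodic (χ.dilate d) H := fun n => by
  have hdH : d ∣ H := dvd_of_mul_right_dvd h
  by_cases hn : d ∣ n
  · rw [dilate_add_of_dvd χ hn hdH, (ZMod.natCast_eq_zero_iff _ _).mpr (Nat.dvd_div_of_mul_dvd h),
      add_zero, dilate, if_pos hn]
  · rw [dilate_add_of_not_dvd χ hn hdH, dilate, if_neg hn]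

theorem periodic_add_mul {c p : ℕ} (hcp : c * p = q) (x : ZMod q) :
    Periodic (fun t : ℕ => χ (x + t * c)) p := fun t => by
  have hpc : (p : ZMod q) * c = 0 := by rw [mul_comm, ← Nat.cast_mul, hcp, ZMod.natCast_self]
  simp only [Nat.cast_add, add_mul, hpc, add_zero]

variable {χ} in
theorem IsPrimitive.exists_unit_ne_one [NeZero q] (hχ : χ.IsPrimitive) {c : ℕ} (hc : c ∣ q)
    (hcq : c ≠ q) :
    ∃ u : (ZMod q)ˣ, ZMod.unitsMap hc u = 1 ∧ χ u ≠ 1 := by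
  have hnot : ¬ χ.FactorsThrough c := fun h =>
    hcq ((Nat.le_of_dvd (NeZero.pos q) hc).antisymm (hχ ▸ Nat.sInf_le h))
  rw [factorsThrough_iff_ker_unitsMap hc] at hnot
  obtain ⟨u, hu, hχu⟩ := SetLike.not_le_iff_exists.mp hnot
  refine ⟨u, hu, fun h => hχu ?_⟩
  rw [MonoidHom.mem_ker, Units.ext_iff, MulChar.coe_toUnitHom, h, Units.val_one]

end CommMonoidWithZero

section CommRing

variable {R : Type*} [CommRing R] {q : ℕ} [NeZero q] {χ : DirichletCharacter R q}

variable (χ) in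
theorem mul_sum_range_add_mul_of_unitsMap_eq_one {c p : ℕ} (hcp : c * p = q)
    {u : (ZMod q)ˣ} (hu : ZMod.unitsMap (Dvd.intro p hcp) u = 1) (x : ZMod q) :
    χ u * ∑ t ∈ range p, χ (x + t * c) = ∑ t ∈ range p, χ (x + t * c) := by
  obtain ⟨s, hs⟩ : ∃ s : ℕ, ((u : ZMod q) - 1) * x = s * c := by
    refine ZMod.exists_eq_natCast_mul_of_castHom_eq_zero (Dvd.intro p hcp) ?_
    have hu' : ZMod.castHom (Dvd.intro p hcp) (ZMod c) u = 1 := congrArg Units.val hu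
    rw [map_mul, map_sub, hu', map_one, sub_self, zero_mul]
  have hv : ((u : ZMod q).val).Coprime p :=
    (ZMod.val_coe_unit_coprime u).coprime_dvd_right (Dvd.intro_left c hcp)
  calc χ u * ∑ t ∈ range p, χ (x + t * c)
      = ∑ t ∈ range p, χ ((x + s * c) + (t * (u : ZMod q).val : ℕ) * c) := by
        rw [mul_sum]
        refine sum_congr rfl fun t _ => ?_
        rw [← map_mul, Nat.cast_mul, ZMod.natCast_zmod_val, ← hs]
        ring_nf
    _ = ∑ t ∈ range p, χ ((x + s * c) + t * c) :=
        (χ.periodic_add_mul hcp _).sum_range_mul_of_coprime hv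
    _ = ∑ t ∈ range p, χ (x + (t + s : ℕ) * c) := by
        refine sum_congr rfl fun t _ => ?_
        push_cast
        ring_nf
    _ = ∑ t ∈ range p, χ (x + t * c) := (χ.periodic_add_mul hcp x).sum_range_add s

theorem IsPrimitive.sum_range_add_mul_eq_zero [IsDomain R] (hχ : χ.IsPrimitive) {c p w : ℕ}
    (hcp : c * p = q) (hp : p ≠ 1) (hw : w.Coprime p) (x : ZMod q) :
    ∑ t ∈ range p, χ (x + (t * w : ℕ) * c) = 0 := by
  rw [(χ.periodic_add_mul hcp x).sum_range_mul_of_coprime hw]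
  have hcq : c ≠ q := fun h => hp ((Nat.mul_eq_left (h ▸ NeZero.ne q)).mp (h ▸ hcp))
  obtain ⟨u, hu, hχu⟩ := hχ.exists_unit_ne_one (Dvd.intro p hcp) hcq
  have hfix := χ.mul_sum_range_add_mul_of_unitsMap_eq_one hcp hu x
  have : (χ u - 1) * ∑ t ∈ range p, χ (x + t * c) = 0 := by rw [sub_mul, hfix, one_mul, sub_self]
  exact (mul_eq_zero.mp this).resolve_left (sub_ne_zero.mpr hχu)

theorem IsPrimitive.sum_range_dilate_add_mul_eq_zero [IsDomain R] (hχ : χ.IsPrimitive)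
    {c p w d : ℕ} (hcp : c * p = q) (hp : p ≠ 1) (hw : w.Coprime p) (hd : d ≠ 0) (n : ℕ) :
    ∑ t ∈ range p, χ.dilate d (n + t * (d * w * c)) = 0 := by
  have hdH : ∀ t, d ∣ t * (d * w * c) := fun t => Dvd.intro (t * w * c) (by ring)
  by_cases hn : d ∣ n
  · rw [← hχ.sum_range_add_mul_eq_zero hcp hp hw (n / d : ℕ)]
    refine sum_congr rfl fun t _ => ?_
    rw [dilate_add_of_dvd χ hn (hdH t), show t * (d * w * c) = d * (t * w * c) by ring,
      Nat.mul_div_cancel_left _ (Nat.pos_of_ne_zero hd), Nat.cast_mul]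
  · exact sum_eq_zero fun t _ => dilate_add_of_not_dvd χ hn (hdH t)

theorem IsPrimitive.sum_range_dilate_mul_eq_zero [IsDomain R] [CharZero R] (hχ : χ.IsPrimitive)
    {d d' m N p : ℕ} {G : ℕ → R} (hp : p.Prime) (hpq : p ∣ q) (hd' : d' ≠ 0)
    (hlt : d'.factorization p < d.factorization p) (hdN : d * q ∣ N) (hd'N : d' * q ∣ N)
    (hG : Periodic G (d' * q)) :
    ∑ a ∈ range N, χ.dilate d (a + m) * G a = 0 := by
  have hd : d ≠ 0 := by rintro rfl; simp at hlt
  have hFG : Periodic (fun a => χ.dilate d (a + m) * G a) N := by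
    obtain ⟨j, hj⟩ := hd'N
    exact ((χ.periodic_dilate hdN).add_const m).mul (by rw [hj, mul_comm]; exact hG.nat_mul j)
  obtain ⟨c, hc⟩ := hpq
  have hw : (ordCompl[p] d').Coprime p :=
    Nat.coprime_comm.mp ((Nat.Prime.coprime_iff_not_dvd hp).mpr (Nat.not_dvd_ordCompl hp hd'))
  have hH : d' * q ∣ d * ordCompl[p] d' * c :=
    calc d' * q = p ^ (d'.factorization p + 1) * ordCompl[p] d' * c := by
          conv_lhs => rw [hc, ← Nat.ordProj_mul_ordCompl_eq_self d' p]
          ring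
      _ ∣ d * ordCompl[p] d' * c := Nat.mul_dvd_mul_right (Nat.mul_dvd_mul_right
          ((pow_dvd_pow p hlt).trans (Nat.ordProj_dvd d p)) _) _
  obtain ⟨j, hj⟩ := hH
  have hGH : Periodic G (d * ordCompl[p] d' * c) := by rw [hj, mul_comm]; exact hG.nat_mul j
  refine sum_range_mul_eq_zero_of_sum_shifts_eq_zero hp.ne_zero hFG hGH fun a => ?_
  rw [← hχ.sum_range_dilate_add_mul_eq_zero (by rw [hc, mul_comm]) hp.ne_one hw hd (a + m)]
  exact sum_congr rfl fun t _ => by rw [add_right_comm]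

end CommRing

variable {q : ℕ} [NeZero q] {χ : DirichletCharacter ℂ q}

theorem IsPrimitive.sum_range_pow_dilate_mul_conj_dilate_eq_zero (hχ : χ.IsPrimitive)
    {k d d' p : ℕ} (hk : k ≠ 0) (hd : d ∣ q ^ (k - 1))
    (hd' : d' ∣ q ^ (k - 1)) (hlt : d'.factorization p < d.factorization p) (m m' : ℕ) :
    ∑ a ∈ range (q ^ k), χ.dilate d (a + m) * starRingEnd ℂ (χ.dilate d' (a + m')) = 0 := by
  have hp : p.Prime := Nat.prime_of_mem_primeFactors
    (Nat.support_factorization d ▸ Finsupp.mem_support_iff.mpr (by omega))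
  have hpq : p ∣ q :=
    hp.dvd_of_dvd_pow ((Nat.dvd_of_factorization_pos (n := d) (by omega)).trans hd)
  exact hχ.sum_range_dilate_mul_eq_zero hp hpq
    (ne_zero_of_dvd_ne_zero (pow_ne_zero _ (NeZero.ne q)) hd') hlt
    (Nat.mul_dvd_pow_of_dvd_pow_sub_one hk hd) (Nat.mul_dvd_pow_of_dvd_pow_sub_one hk hd')
    (((χ.periodic_dilate dvd_rfl).add_const m').comp _)

end DirichletCharacter

open DirichletCharacter in
/-- Perfect off-diagonal cancellation: for a primitive Dirichlet character `χ`
mod `q` and distinct divisors `d₁ ≠ d₂` of `q^{k-1}`, the sum over a full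
period `q^k` of `1_{d₁∣a+m₁} χ((a+m₁)/d₁) ⋅ conj(1_{d₂∣a+m₂} χ((a+m₂)/d₂))`
vanishes. -/
theorem off_diagonal_cancellation (q k : ℕ) (hq : 1 ≤ q) (hk : 1 ≤ k)
    (χ : DirichletCharacter ℂ q) (hχ : χ.IsPrimitive)
    (d₁ d₂ : ℕ) (hd₁ : d₁ ∣ q ^ (k - 1)) (hd₂ : d₂ ∣ q ^ (k - 1))
    (hne : d₁ ≠ d₂) (m₁ m₂ : ℕ) :
    ∑ a ∈ Finset.Icc 1 (q ^ k),
      (if d₁ ∣ a + m₁ then χ (((a + m₁) / d₁ : ℕ) : ZMod q) else 0) *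
        (starRingEnd ℂ)
          (if d₂ ∣ a + m₂ then χ (((a + m₂) / d₂ : ℕ) : ZMod q) else 0)
      = 0 := by
  have : NeZero q := ⟨by omega⟩
  have hk0 : k ≠ 0 := by omega
  obtain ⟨p, hp⟩ : ∃ p, d₁.factorization p ≠ d₂.factorization p := by
    by_contra! h
    have hq0 : q ^ (k - 1) ≠ 0 := pow_ne_zero _ (NeZero.ne q)
    exact hne (Nat.eq_of_factorization_eq (ne_zero_of_dvd_ne_zero hq0 hd₁)
      (ne_zero_of_dvd_ne_zero hq0 hd₂) h)
  change ∑ a ∈ Icc 1 (q ^ k), χ.dilate d₁ (a + m₁) * starRingEnd ℂ (χ.dilate d₂ (a + m₂)) = 0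
  have hper : Periodic (fun a => χ.dilate d₁ (a + m₁) * starRingEnd ℂ (χ.dilate d₂ (a + m₂)))
      (q ^ k) :=
    ((χ.periodic_dilate (Nat.mul_dvd_pow_of_dvd_pow_sub_one hk0 hd₁)).add_const m₁).mul
      (((χ.periodic_dilate (Nat.mul_dvd_pow_of_dvd_pow_sub_one hk0 hd₂)).add_const m₂).comp _)
  rw [← Ico_add_one_right_eq_Icc, add_comm, hper.sum_Ico_eq_sum_range]
  rcases hp.lt_or_gt with hlt | hlt
  · rw [← map_zero (starRingEnd ℂ),
      ← hχ.sum_range_pow_dilate_mul_conj_dilate_eq_zero hk0 hd₂ hd₁ hlt m₂ m₁, map_sum]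
    exact sum_congr rfl fun a _ => by rw [map_mul, starRingEnd_self_apply, mul_comm]
  · exact hχ.sum_range_pow_dilate_mul_conj_dilate_eq_zero hk0 hd₁ hd₂ hlt m₁ m₂
end

section
/- Let h : ℕ+ → S¹ be completely multiplicative and X ≥ 2. Define the Euler product 𝔖 = ∏_p (1 - h(p)/p^{1+1/log X})^{-1}. If ∑_{p ≤ X} (1 - Re h(p))/p ≤ B, then there are constants c(B), C(B) > 0 with c(B) log X ≤ |𝔖| ≤ C(B) log X. -/
/-!
Put `σ = 1 + 1 / log X`. The Euler product is the Dirichlet series `∑ h(n) n^{-σ}`, so its norm is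
at most `ζ(σ) ≤ 1 + 1 / (σ - 1) = 1 + log X`.

For the lower bound, `-log |1 - z| ≥ Re z - |z|² / 2` gives
`log |𝔖| ≥ ∑_p Re h(p) p^{-σ} - 1`. As `1 + Re h(p) ≥ 0` and `p^{-σ} ≤ 1 / p`, the primes `p ≤ X`
alone give `∑_p (1 + Re h(p)) p^{-σ} ≥ 2 ∑_{p ≤ X} p^{-σ} - B`. Both prime sums
`∑_p p^{-σ}` and `∑_{p ≤ X} p^{-σ}` are `log log X + O(1)`: the first is at most `log ζ(σ) + 1`
(the lower bound again, for `h = 1`), and the partial Euler product over `p ≤ X` dominates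
`∑_{n ≤ X} n^{-σ} ≥ e⁻¹ ∑_{n ≤ X} 1 / n ≥ e⁻¹ log X`. Hence `log |𝔖| ≥ log log X - B - O(1)`.
-/

open Real Finset

lemma Complex.re_sub_norm_sq_div_two_le_neg_log_norm_one_sub {z : ℂ} (hz : ‖z‖ < 1) :
    z.re - ‖z‖ ^ 2 / 2 ≤ -Real.log ‖1 - z‖ := by
  have hpos : 0 < ‖1 - z‖ := by
    refine norm_pos_iff.mpr fun h ↦ ?_
    rw [← sub_eq_zero.mp h, norm_one] at hz
    exact lt_irrefl _ hz
  have hsq : ‖1 - z‖ ^ 2 = 1 - 2 * z.re + ‖z‖ ^ 2 := by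
    rw [Complex.sq_norm, Complex.sq_norm, Complex.normSq_apply, Complex.normSq_apply]
    simp only [Complex.sub_re, Complex.one_re, Complex.sub_im, Complex.one_im]
    ring
  have := log_le_sub_one_of_pos (pow_pos hpos 2)
  rw [log_pow, hsq] at this
  push_cast at this
  linarith

lemma Real.neg_log_one_sub_le {x : ℝ} (hx : x ≤ 1 / 2) : -log (1 - x) ≤ x + 2 * x ^ 2 := by
  have hpos : 0 < 1 - x := by linarith
  have hinv : (1 - x)⁻¹ ≤ 1 + x + 2 * x ^ 2 := by
    rw [inv_le_iff_one_le_mul₀ hpos]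
    nlinarith
  linarith [one_sub_inv_le_log_of_pos hpos]

lemma one_div_rpow_le_one_div {x σ : ℝ} (hx : 1 ≤ x) (hσ : 1 ≤ σ) : 1 / x ^ σ ≤ 1 / x := by
  have := rpow_le_rpow_of_exponent_le hx hσ
  rw [rpow_one] at this
  exact one_div_le_one_div_of_le (by linarith) this

lemma one_div_mul_exp_one_le_one_div_rpow {X x : ℝ} (hX : 1 < X) (hx : 1 ≤ x) (hxX : x ≤ X) :
    1 / (x * exp 1) ≤ 1 / x ^ (1 + 1 / log X) := by
  have hx₀ : 0 < x := by linarith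
  have hlogX : 0 < log X := log_pos hX
  have hexp : x ^ (1 / log X) ≤ exp 1 := by
    rw [rpow_def_of_pos hx₀, exp_le_exp, mul_one_div, div_le_one hlogX]
    exact log_le_log hx₀ hxX
  rw [rpow_add hx₀, rpow_one]
  gcongr

lemma tsum_one_div_nat_rpow_le {s : ℝ} (hs : 1 < s) :
    ∑' n : ℕ, 1 / (n : ℝ) ^ s ≤ 1 + 1 / (s - 1) := by
  have hT : 0 ≤ ZetaAsymptotics.termTSum s := tsum_nonneg fun n ↦ ZetaAsymptotics.term_nonneg _ _
  have := ZetaAsymptotics.zeta_limit_aux1 hs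
  rw [(Real.summable_one_div_nat_rpow.mpr hs).tsum_eq_zero_add]
  push_cast
  rw [zero_rpow (by positivity), div_zero, zero_add]
  nlinarith

lemma summable_primes_one_div_rpow {σ : ℝ} (hσ : 1 < σ) :
    Summable fun p : Nat.Primes ↦ 1 / (p : ℝ) ^ σ :=
  (Real.summable_one_div_nat_rpow.mpr hσ).subtype _

lemma sum_filter_prime_le_tsum_primes {f : ℕ → ℝ} (hf : Summable fun p : Nat.Primes ↦ f p)
    (hf₀ : ∀ p : Nat.Primes, 0 ≤ f p) (s : Finset ℕ) :
    ∑ p ∈ s with p.Prime, f p ≤ ∑' p : Nat.Primes, f p := by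
  rw [← sum_subtype_eq_sum_filter]
  exact Summable.sum_le_tsum (f := fun p : Nat.Primes ↦ f p) _ (fun p _ ↦ hf₀ p) hf

lemma tsum_primes_one_div_rpow_sq_le_two {σ : ℝ} (hσ : 1 ≤ σ) :
    ∑' p : Nat.Primes, (1 / (p : ℝ) ^ σ) ^ 2 ≤ 2 := by
  have hsum := Real.summable_one_div_nat_rpow.mpr (one_lt_two : (1 : ℝ) < 2)
  have hle (p : Nat.Primes) : (1 / (p : ℝ) ^ σ) ^ 2 ≤ 1 / (p : ℝ) ^ (2 : ℝ) := by
    have hp : (1 : ℝ) ≤ p := by exact_mod_cast p.prop.one_lt.le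
    rw [rpow_two, ← one_div_pow]
    exact pow_le_pow_left₀ (by positivity) (one_div_rpow_le_one_div hp hσ) 2
  calc ∑' p : Nat.Primes, (1 / (p : ℝ) ^ σ) ^ 2
      ≤ ∑' p : Nat.Primes, 1 / (p : ℝ) ^ (2 : ℝ) :=
        have hsum₂ := hsum.subtype {p | p.Prime}
        (hsum₂.of_nonneg_of_le (fun _ ↦ by positivity) hle).tsum_le_tsum hle hsum₂
    _ ≤ ∑' n : ℕ, 1 / (n : ℝ) ^ (2 : ℝ) :=
        Summable.tsum_subtype_le (fun n : ℕ ↦ 1 / (n : ℝ) ^ (2 : ℝ)) {p | p.Prime}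
          (fun _ ↦ by positivity) hsum
    _ ≤ 2 := by
        have := tsum_one_div_nat_rpow_le (one_lt_two : (1 : ℝ) < 2)
        norm_num at this ⊢
        exact this

namespace EulerProduct

lemma norm_tprod_le_tsum_norm {F : ℕ →*₀ ℂ} (hsum : Summable (‖F ·‖)) :
    ‖∏' p : Nat.Primes, (1 - F p)⁻¹‖ ≤ ∑' n, ‖F n‖ := by
  rw [eulerProduct_completely_multiplicative_tprod hsum]
  exact norm_tsum_le_tsum_norm hsum

lemma exp_tsum_re_sub_le_norm_tprod {F : ℕ →*₀ ℂ} (hsum : Summable (‖F ·‖)) :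
    exp (∑' p : Nat.Primes, (F p).re - (∑' p : Nat.Primes, ‖F p‖ ^ 2) / 2) ≤
      ‖∏' p : Nat.Primes, (1 - F p)⁻¹‖ := by
  have hlt (p : Nat.Primes) : ‖F p‖ < 1 :=
    hsum.of_norm.norm_lt_one (f := F.toMonoidHom) p.prop.one_lt
  have hF : Summable fun p : Nat.Primes ↦ F p := hsum.of_norm.subtype _
  have hre : Summable fun p : Nat.Primes ↦ (F p).re := (Complex.hasSum_re hF.hasSum).summable
  have hsq : Summable fun p : Nat.Primes ↦ ‖F p‖ ^ 2 / 2 :=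
    ((hsum.subtype _).of_nonneg_of_le (fun _ ↦ by positivity)
      fun p ↦ by dsimp; nlinarith [hlt p, norm_nonneg (F p)]).div_const 2
  have hlog : Summable fun p : Nat.Primes ↦ -Complex.log (1 - F p) := hF.clog_one_sub.neg
  rw [eulerProduct_completely_multiplicative_tprod hsum, ← exp_tsum_primes_log_eq_tsum hsum,
    Complex.norm_exp, Complex.re_tsum hlog, ← tsum_div_const, ← hre.tsum_sub hsq, exp_le_exp]
  refine (hre.sub hsq).tsum_le_tsum (fun p ↦ ?_) (Complex.hasSum_re hlog.hasSum).summable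
  simpa [Complex.log_re] using Complex.re_sub_norm_sq_div_two_le_neg_log_norm_one_sub (hlt p)

lemma sum_Icc_le_prod_primesBelow {f : ℕ →* ℝ} (hf : Summable f) (hf₀ : ∀ n, 0 ≤ f n) (N : ℕ) :
    ∑ n ∈ Icc 1 N, f n ≤ ∏ p ∈ (N + 1).primesBelow, (1 - f p)⁻¹ := by
  have hsum : HasSum ((N + 1).smoothNumbers.indicator f) _ := hasSum_subtype_iff_indicator.mp
    (summable_and_hasSum_smoothNumbers_prod_primesBelow_geometric
      (fun hp ↦ hf.norm_lt_one hp.one_lt) (N + 1)).2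
  calc ∑ n ∈ Icc 1 N, f n = ∑ n ∈ Icc 1 N, (N + 1).smoothNumbers.indicator f n :=
        sum_congr rfl fun n hn ↦ (Set.indicator_of_mem (Nat.mem_smoothNumbers_of_lt
          (mem_Icc.mp hn).1 (Nat.lt_succ_of_le (mem_Icc.mp hn).2)) f).symm
    _ ≤ _ := sum_le_hasSum _ (fun n _ ↦ Set.indicator_nonneg (fun n _ ↦ hf₀ n) n) hsum

end EulerProduct

@[simps]
noncomputable def oneDivNatRpowHom (σ : ℝ) : ℕ →* ℝ where
  toFun n := 1 / (n : ℝ) ^ σ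
  map_one' := by simp
  map_mul' m n := by
    rw [Nat.cast_mul, mul_rpow (Nat.cast_nonneg m) (Nat.cast_nonneg n), one_div_mul_one_div]

@[simps]
noncomputable def LSeries.termHom (h : ℕ → ℂ) (h₁ : h 1 = 1)
    (hmul : ∀ m n, 0 < m → 0 < n → h (m * n) = h m * h n) (s : ℂ) : ℕ →*₀ ℂ where
  toFun := term h s
  map_zero' := term_zero h s
  map_one' := by simp [h₁]
  map_mul' m n := by
    rcases eq_or_ne m 0 with rfl | hm
    · simp
    rcases eq_or_ne n 0 with rfl | hn
    · simp
    rw [term_of_ne_zero (mul_ne_zero hm hn), term_of_ne_zero hm, term_of_ne_zero hn,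
      hmul m n (Nat.pos_of_ne_zero hm) (Nat.pos_of_ne_zero hn), Nat.cast_mul,
      Complex.natCast_mul_natCast_cpow, mul_div_mul_comm]

lemma LSeries.norm_term_ofReal {h : ℕ → ℂ} (hnorm : ∀ n, 0 < n → ‖h n‖ = 1) {σ : ℝ}
    (hσ : σ ≠ 0) (n : ℕ) : ‖term h σ n‖ = 1 / (n : ℝ) ^ σ := by
  rw [norm_term_eq, Complex.ofReal_re]
  rcases eq_or_ne n 0 with rfl | hn
  · simp [zero_rpow hσ]
  · rw [if_neg hn, hnorm n (Nat.pos_of_ne_zero hn)]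

lemma LSeries.summable_norm_term_ofReal {h : ℕ → ℂ} (hnorm : ∀ n, 0 < n → ‖h n‖ = 1) {σ : ℝ}
    (hσ : 1 < σ) : Summable (‖term h σ ·‖) := by
  simpa only [norm_term_ofReal hnorm (by positivity : σ ≠ 0)]
    using Real.summable_one_div_nat_rpow.mpr hσ

lemma LSeries.re_term_ofReal (h : ℕ → ℂ) {σ : ℝ} (n : ℕ) (hn : n ≠ 0) :
    (term h σ n).re = (h n).re / (n : ℝ) ^ σ := by
  rw [term_of_ne_zero hn, ← Complex.ofReal_natCast, ← Complex.ofReal_cpow (Nat.cast_nonneg n),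
    Complex.div_ofReal_re]

noncomputable def primeEulerProduct (h : ℕ → ℂ) (s : ℂ) : ℂ :=
  ∏' p : Nat.Primes, (1 - h p / (p : ℂ) ^ s)⁻¹

lemma primeEulerProduct_eq_tprod_term (h : ℕ → ℂ) (s : ℂ) :
    primeEulerProduct h s = ∏' p : Nat.Primes, (1 - LSeries.term h s p)⁻¹ :=
  tprod_congr fun p ↦ by rw [LSeries.term_of_ne_zero p.prop.ne_zero]

section UnimodularEulerProduct

variable {h : ℕ → ℂ}

lemma apply_one_eq_one_of_norm_eq_one (hnorm : ∀ n, 0 < n → ‖h n‖ = 1)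
    (hmul : ∀ m n, 0 < m → 0 < n → h (m * n) = h m * h n) : h 1 = 1 := by
  have h₀ : h 1 ≠ 0 := norm_ne_zero_iff.mp (by rw [hnorm 1 one_pos]; exact one_ne_zero)
  exact (mul_eq_left₀ h₀).mp (by simpa using (hmul 1 1 one_pos one_pos).symm)

lemma norm_primeEulerProduct_le (hnorm : ∀ n, 0 < n → ‖h n‖ = 1)
    (hmul : ∀ m n, 0 < m → 0 < n → h (m * n) = h m * h n) {σ : ℝ} (hσ : 1 < σ) :
    ‖primeEulerProduct h σ‖ ≤ 1 + 1 / (σ - 1) := by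
  have hterm := LSeries.norm_term_ofReal hnorm (by positivity : σ ≠ 0)
  let F := LSeries.termHom h (apply_one_eq_one_of_norm_eq_one hnorm hmul) hmul σ
  have hsum : Summable (‖F ·‖) := LSeries.summable_norm_term_ofReal hnorm hσ
  calc ‖primeEulerProduct h σ‖ = ‖∏' p : Nat.Primes, (1 - F p)⁻¹‖ := by
        rw [primeEulerProduct_eq_tprod_term]; rfl
    _ ≤ ∑' n, ‖F n‖ := EulerProduct.norm_tprod_le_tsum_norm hsum
    _ = ∑' n : ℕ, 1 / (n : ℝ) ^ σ := tsum_congr hterm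
    _ ≤ 1 + 1 / (σ - 1) := tsum_one_div_nat_rpow_le hσ

lemma exp_tsum_re_div_rpow_sub_one_le_norm_primeEulerProduct
    (hnorm : ∀ n, 0 < n → ‖h n‖ = 1) (hmul : ∀ m n, 0 < m → 0 < n → h (m * n) = h m * h n)
    {σ : ℝ} (hσ : 1 < σ) :
    exp (∑' p : Nat.Primes, (h p).re / (p : ℝ) ^ σ - 1) ≤ ‖primeEulerProduct h σ‖ := by
  have hterm := LSeries.norm_term_ofReal hnorm (by positivity : σ ≠ 0)
  let F := LSeries.termHom h (apply_one_eq_one_of_norm_eq_one hnorm hmul) hmul σ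
  have hsum : Summable (‖F ·‖) := LSeries.summable_norm_term_ofReal hnorm hσ
  have hre (p : Nat.Primes) : (F p).re = (h p).re / (p : ℝ) ^ σ :=
    LSeries.re_term_ofReal h p p.prop.ne_zero
  have hsq (p : Nat.Primes) : ‖F p‖ ^ 2 = (1 / (p : ℝ) ^ σ) ^ 2 := by rw [← hterm]; rfl
  have hA := EulerProduct.exp_tsum_re_sub_le_norm_tprod hsum
  rw [tsum_congr hre, tsum_congr hsq] at hA
  rw [primeEulerProduct_eq_tprod_term]
  refine le_trans (exp_le_exp.mpr ?_) hA
  linarith [tsum_primes_one_div_rpow_sq_le_two hσ.le]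

lemma two_mul_sum_sub_le_tsum_add_tsum_re_div_rpow (hnorm : ∀ n, 0 < n → ‖h n‖ = 1)
    {σ : ℝ} (hσ : 1 < σ) (s : Finset ℕ) :
    2 * ∑ p ∈ s with p.Prime, 1 / (p : ℝ) ^ σ - ∑ p ∈ s with p.Prime, (1 - (h p).re) / p ≤
      ∑' p : Nat.Primes, 1 / (p : ℝ) ^ σ + ∑' p : Nat.Primes, (h p).re / (p : ℝ) ^ σ := by
  have hre {p : ℕ} (hp : p.Prime) : |(h p).re| ≤ 1 := hnorm p hp.pos ▸ Complex.abs_re_le_norm _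
  have hnn (p : Nat.Primes) : 0 ≤ (1 + (h p).re) / (p : ℝ) ^ σ :=
    div_nonneg (by linarith [abs_le.mp (hre p.prop)]) (by positivity)
  have hsum : Summable fun p : Nat.Primes ↦ (1 + (h p).re) / (p : ℝ) ^ σ :=
    ((summable_primes_one_div_rpow hσ).mul_left 2).of_nonneg_of_le hnn fun p ↦ by
      rw [mul_one_div]
      exact div_le_div_of_nonneg_right (by linarith [abs_le.mp (hre p.prop)]) (by positivity)
  have hsum_re : Summable fun p : Nat.Primes ↦ (h p).re / (p : ℝ) ^ σ :=
    (hsum.sub (summable_primes_one_div_rpow hσ)).congr fun p ↦ by ring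
  rw [mul_sum, ← sum_sub_distrib, ← (summable_primes_one_div_rpow hσ).tsum_add hsum_re]
  refine le_trans (sum_le_sum fun p hp ↦ ?_) ((sum_filter_prime_le_tsum_primes
    (f := fun n ↦ (1 + (h n).re) / (n : ℝ) ^ σ) hsum hnn s).trans_eq (tsum_congr fun p ↦ ?_))
  · have hp := (mem_filter.mp hp).2
    have hx : 1 / (p : ℝ) ^ σ ≤ 1 / p := one_div_rpow_le_one_div (mod_cast hp.one_lt.le) hσ.le
    calc 2 * (1 / (p : ℝ) ^ σ) - (1 - (h p).re) / p
        ≤ 2 * (1 / (p : ℝ) ^ σ) - (1 - (h p).re) * (1 / (p : ℝ) ^ σ) := by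
          rw [div_eq_mul_one_div _ (p : ℝ)]
          gcongr
          linarith [abs_le.mp (hre hp)]
      _ = (1 + (h p).re) / (p : ℝ) ^ σ := by ring
  · ring

lemma tsum_primes_one_div_rpow_le {σ : ℝ} (hσ : 1 < σ) :
    ∑' p : Nat.Primes, 1 / (p : ℝ) ^ σ ≤ log (1 + 1 / (σ - 1)) + 1 := by
  have hnorm : ∀ n, 0 < n → ‖(fun _ ↦ 1 : ℕ → ℂ) n‖ = 1 := fun _ _ ↦ norm_one
  have hmul : ∀ m n, 0 < m → 0 < n → (fun _ ↦ 1 : ℕ → ℂ) (m * n) = 1 * 1 :=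
    fun _ _ _ _ ↦ (mul_one 1).symm
  have hlow := exp_tsum_re_div_rpow_sub_one_le_norm_primeEulerProduct hnorm hmul hσ
  have hup := norm_primeEulerProduct_le hnorm hmul hσ
  rw [Complex.one_re] at hlow
  have := (le_log_iff_exp_le (by positivity)).mpr (hlow.trans hup)
  linarith

lemma log_log_sub_one_le_sum_primesBelow {X : ℝ} (hX : 1 < X) :
    log (log X) - 1 ≤ ∑ p ∈ (⌊X⌋₊ + 1).primesBelow,
      (1 / (p : ℝ) ^ (1 + 1 / log X) + 2 * (1 / (p : ℝ) ^ (1 + 1 / log X)) ^ 2) := by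
  set σ := 1 + 1 / log X with hσ_def
  have hlogX : 0 < log X := log_pos hX
  have hσ : 1 < σ := by rw [hσ_def]; linarith [one_div_pos.mpr hlogX]
  have hhalf (p : ℕ) (hp : p ∈ (⌊X⌋₊ + 1).primesBelow) : 1 / (p : ℝ) ^ σ ≤ 1 / 2 := by
    have hp2 : (2 : ℝ) ≤ p := by exact_mod_cast (Nat.prime_of_mem_primesBelow hp).two_le
    exact (one_div_rpow_le_one_div (by linarith) hσ.le).trans (one_div_le_one_div_of_le two_pos hp2)
  have hprod : log X / exp 1 ≤ ∏ p ∈ (⌊X⌋₊ + 1).primesBelow, (1 - 1 / (p : ℝ) ^ σ)⁻¹ :=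
    calc log X / exp 1 ≤ harmonic ⌊X⌋₊ / exp 1 := by
          gcongr
          exact log_le_harmonic_floor X (by linarith)
      _ = ∑ n ∈ Icc 1 ⌊X⌋₊, 1 / ((n : ℝ) * exp 1) := by
          rw [harmonic_eq_sum_Icc]
          push_cast
          rw [sum_div]
          refine sum_congr rfl fun n _ ↦ ?_
          rw [one_div, mul_inv, div_eq_mul_inv]
      _ ≤ ∑ n ∈ Icc 1 ⌊X⌋₊, 1 / (n : ℝ) ^ σ := sum_le_sum fun n hn ↦ by
          have hn' := mem_Icc.mp hn
          exact one_div_mul_exp_one_le_one_div_rpow hX (by exact_mod_cast hn'.1)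
            ((Nat.cast_le.mpr hn'.2).trans (Nat.floor_le (by linarith)))
      _ ≤ _ := by
          simpa only [oneDivNatRpowHom_apply] using EulerProduct.sum_Icc_le_prod_primesBelow
            (f := oneDivNatRpowHom σ) (Real.summable_one_div_nat_rpow.mpr hσ)
            (fun n ↦ by rw [oneDivNatRpowHom_apply]; positivity) ⌊X⌋₊
  calc log (log X) - 1 = log (log X / exp 1) := by rw [log_div hlogX.ne' (exp_ne_zero 1), log_exp]
    _ ≤ log (∏ p ∈ (⌊X⌋₊ + 1).primesBelow, (1 - 1 / (p : ℝ) ^ σ)⁻¹) :=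
        log_le_log (by positivity) hprod
    _ = ∑ p ∈ (⌊X⌋₊ + 1).primesBelow, -log (1 - 1 / (p : ℝ) ^ σ) := by
        rw [log_prod fun p hp ↦ inv_ne_zero (by linarith [hhalf p hp])]
        simp only [log_inv]
    _ ≤ _ := sum_le_sum fun p hp ↦ neg_log_one_sub_le (hhalf p hp)

lemma norm_primeEulerProduct_le_three_mul_log (hnorm : ∀ n, 0 < n → ‖h n‖ = 1)
    (hmul : ∀ m n, 0 < m → 0 < n → h (m * n) = h m * h n) {X : ℝ} (hX : 2 ≤ X) :
    ‖primeEulerProduct h (1 + 1 / log X : ℝ)‖ ≤ 3 * log X := by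
  have hl : 1 / 2 < log X := by linarith [log_two_gt_d9, log_le_log two_pos hX]
  have := norm_primeEulerProduct_le hnorm hmul
    (by linarith [one_div_pos.mpr (by linarith : 0 < log X)] : 1 < 1 + 1 / log X)
  rw [add_sub_cancel_left, one_div_one_div] at this
  linarith

lemma exp_neg_mul_log_le_norm_primeEulerProduct (hnorm : ∀ n, 0 < n → ‖h n‖ = 1)
    (hmul : ∀ m n, 0 < m → 0 < n → h (m * n) = h m * h n) {B X : ℝ} (hX : 2 ≤ X)
    (hB : ∑ p ∈ range (⌊X⌋₊ + 1) with p.Prime, (1 - (h p).re) / p ≤ B) :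
    exp (-(B + 13)) * log X ≤ ‖primeEulerProduct h (1 + 1 / log X : ℝ)‖ := by
  have hl : 0.69 < log X := by linarith [log_two_gt_d9, log_le_log two_pos hX]
  set σ := 1 + 1 / log X with hσ_def
  have hσ : 1 < σ := by linarith [one_div_pos.mpr (by linarith : 0 < log X)]
  have hP : ∑' p : Nat.Primes, 1 / (p : ℝ) ^ σ ≤ log (1 + log X) + 1 := by
    simpa only [hσ_def, add_sub_cancel_left, one_div_one_div] using tsum_primes_one_div_rpow_le hσ
  have hlog : log (1 + log X) ≤ log (log X) + 1 :=
    calc log (1 + log X) ≤ log (log X * exp 1) :=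
          log_le_log (by linarith) (by nlinarith [exp_one_gt_d9])
      _ = log (log X) + 1 := by rw [log_mul (by linarith) (exp_ne_zero 1), log_exp]
  have hsq : Summable fun p : Nat.Primes ↦ (1 / (p : ℝ) ^ σ) ^ 2 :=
    (summable_primes_one_div_rpow hσ).of_nonneg_of_le (fun _ ↦ by positivity) fun p ↦
      pow_le_of_le_one (by positivity) (div_le_one_of_le₀
        (one_le_rpow (mod_cast p.prop.one_lt.le) (by linarith)) (by positivity)) two_ne_zero
  have hQ := (sum_filter_prime_le_tsum_primes (f := fun n ↦ (1 / (n : ℝ) ^ σ) ^ 2) hsq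
    (fun _ ↦ by positivity) (range (⌊X⌋₊ + 1))).trans (tsum_primes_one_div_rpow_sq_le_two hσ.le)
  have hPfin := log_log_sub_one_le_sum_primesBelow (by linarith : 1 < X)
  rw [sum_add_distrib, ← mul_sum, Nat.primesBelow, ← hσ_def] at hPfin
  have htwist := two_mul_sum_sub_le_tsum_add_tsum_re_div_rpow hnorm hσ (range (⌊X⌋₊ + 1))
  refine le_trans ?_ (exp_tsum_re_div_rpow_sub_one_le_norm_primeEulerProduct hnorm hmul hσ)
  rw [← exp_log (by linarith : 0 < log X), ← exp_add, exp_le_exp]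
  linarith

end UnimodularEulerProduct

/-- If the completely multiplicative `S¹`-valued function `h` satisfies
`∑_{p ≤ X} (1 - Re h(p))/p ≤ B`, then the Euler product
`𝔖 = ∏_p (1 - h(p)/p^{1+1/log X})⁻¹` satisfies
`c(B) log X ≤ |𝔖| ≤ C(B) log X`. -/
theorem euler_product_size (B : ℝ) :
    ∃ c C : ℝ, 0 < c ∧ 0 < C ∧
      ∀ (X : ℝ), 2 ≤ X → ∀ h : ℕ → ℂ,
        (∀ n, 0 < n → ‖h n‖ = 1) →
        (∀ m n, 0 < m → 0 < n → h (m * n) = h m * h n) →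
        (∑ p ∈ (Finset.range (⌊X⌋₊ + 1)).filter Nat.Prime,
            (1 - (h p).re) / p ≤ B) →
        c * Real.log X ≤
            ‖∏' p : Nat.Primes,
              (1 - h (p : ℕ) / ((p : ℕ) : ℂ) ^
                ((1 + 1 / Real.log X : ℝ) : ℂ))⁻¹‖ ∧
          ‖∏' p : Nat.Primes,
              (1 - h (p : ℕ) / ((p : ℕ) : ℂ) ^
                ((1 + 1 / Real.log X : ℝ) : ℂ))⁻¹‖ ≤ C * Real.log X := by
  refine ⟨exp (-(B + 13)), 3, exp_pos _, three_pos, fun X hX h hnorm hmul hB ↦ ?_⟩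
  exact ⟨exp_neg_mul_log_le_norm_primeEulerProduct hnorm hmul hX hB,
    norm_primeEulerProduct_le_three_mul_log hnorm hmul hX⟩
end

section
/- Let q ≥ 2, k ≥ 1 and let χ̃ be a completely multiplicative function with |χ̃| = 1 that agrees with a Dirichlet character χ mod q on integers coprime to q. If a mod q^k is a good residue class (i.e., no p^k with p ∣ q divides a + m for any 1 ≤ m ≤ 2H), then for all n ≡ a (mod q^k) and all 1 ≤ m ≤ 2H: χ̃(n + m) = χ̃(gcd(a+m, q^k)) · χ((a+m)/gcd(a+m, q^k)), and in particular χ̃(n+m) depends only on a and m, not on n. -/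
/-!
Write `x = a + m` and `d = gcd(x, q^k)`. Goodness of `a` bounds the `p`-adic valuation of `x` by
`k - 1` at every prime `p ∣ q`, so `d ∣ q^(k-1)`, i.e. `d * q ∣ q^k`. For `n ≡ a (mod q^k)` the
number `y = n + m` satisfies `gcd(y, q^k) = d`, hence `y / d` is coprime to `q` and congruent to
`x / d` modulo `q`. Complete multiplicativity then gives `χ̃(y) = χ̃(d) χ(y / d) = χ̃(d) χ(x / d)`.
-/

theorem Nat.gcd_pow_succ_dvd_pow_of_forall_not_pow_succ_dvd {x q k : ℕ}
    (h : ∀ p : ℕ, p.Prime → p ∣ q → ¬ p ^ (k + 1) ∣ x) :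
    Nat.gcd x (q ^ (k + 1)) ∣ q ^ k := by
  refine (Nat.dvd_iff_prime_pow_dvd_dvd _ _).mpr fun p i hp hpi => ?_
  rcases i.eq_zero_or_pos with rfl | hi
  · simp
  have hpq : p ∣ q :=
    hp.dvd_of_dvd_pow ((dvd_pow_self p hi.ne').trans (hpi.trans (Nat.gcd_dvd_right _ _)))
  have hik : i ≤ k := by
    by_contra! hki
    exact h p hp hpq ((pow_dvd_pow p hki).trans (hpi.trans (Nat.gcd_dvd_left _ _)))
  exact (pow_dvd_pow p hik).trans (pow_dvd_pow_of_dvd hpq k)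

theorem Nat.coprime_div_gcd_of_gcd_mul_dvd {x q N : ℕ} (hN : N ≠ 0)
    (h : Nat.gcd x N * q ∣ N) : Nat.Coprime (x / Nat.gcd x N) q := by
  set d := Nat.gcd x N
  have hd : d ≠ 0 := (Nat.gcd_pos_of_pos_right x (Nat.pos_of_ne_zero hN)).ne'
  refine Nat.coprime_of_dvd fun p hp hpx hpq => hp.not_dvd_one ?_
  have hdpx : d * p ∣ x := Nat.mul_dvd_of_dvd_div (Nat.gcd_dvd_left x N) hpx
  have hdpN : d * p ∣ N := (Nat.mul_dvd_mul_left d hpq).trans h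
  have hdpd : d * p ∣ d * 1 := by simpa using Nat.dvd_gcd hdpx hdpN
  exact Nat.dvd_of_mul_dvd_mul_left (Nat.pos_of_ne_zero hd) hdpd

theorem Nat.ModEq.div_of_dvd {a b c m : ℕ} (h : a ≡ b [MOD c * m]) (ha : c ∣ a) (hb : c ∣ b) :
    a / c ≡ b / c [MOD m] := by
  rcases eq_or_ne c 0 with rfl | hc
  · simp only [Nat.div_zero]
    rfl
  refine Nat.ModEq.mul_left_cancel' hc ?_
  rwa [Nat.mul_div_cancel' ha, Nat.mul_div_cancel' hb]

theorem good_residue_value_general (q k H : ℕ) (hq : 2 ≤ q) (hk : 1 ≤ k)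
    (χ : DirichletCharacter ℂ q) (χt : ℕ → ℂ)
    (hmul : ∀ m n, 0 < m → 0 < n → χt (m * n) = χt m * χt n)
    (hagree : ∀ n : ℕ, Nat.Coprime n q → χt n = χ (n : ZMod q))
    (a : ℕ)
    (hgood : ∀ p : ℕ, p.Prime → p ∣ q →
      ∀ m ∈ Finset.Icc 1 (2 * H), ¬ p ^ k ∣ a + m) :
    ∀ n : ℕ, 0 < n → n % q ^ k = a % q ^ k →
      ∀ m ∈ Finset.Icc 1 (2 * H),
        χt (n + m) = χt (Nat.gcd (a + m) (q ^ k)) *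
          χ ((((a + m) / Nat.gcd (a + m) (q ^ k) : ℕ)) : ZMod q) := by
  intro n _ hmod m hm
  obtain ⟨j, rfl⟩ : ∃ j, k = j + 1 := ⟨k - 1, by omega⟩
  have hqk : q ^ (j + 1) ≠ 0 := pow_ne_zero _ (by omega)
  set d := Nat.gcd (a + m) (q ^ (j + 1))
  have hdq : d * q ∣ q ^ (j + 1) := by
    rw [pow_succ]
    exact mul_dvd_mul_right
      (Nat.gcd_pow_succ_dvd_pow_of_forall_not_pow_succ_dvd fun p hp hpq => hgood p hp hpq m hm) q
  have hcong : n + m ≡ a + m [MOD q ^ (j + 1)] := Nat.ModEq.add_right m hmod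
  have hgcd : Nat.gcd (n + m) (q ^ (j + 1)) = d := hcong.gcd_eq
  have hdy : d ∣ n + m := hgcd ▸ Nat.gcd_dvd_left _ _
  have hcop : Nat.Coprime ((n + m) / d) q :=
    hgcd ▸ Nat.coprime_div_gcd_of_gcd_mul_dvd hqk (hgcd ▸ hdq)
  have hquot : (n + m) / d ≡ (a + m) / d [MOD q] :=
    (hcong.of_dvd hdq).div_of_dvd hdy (Nat.gcd_dvd_left _ _)
  have hd : 0 < d := Nat.gcd_pos_of_pos_right _ (Nat.pos_of_ne_zero hqk)
  have hy : 0 < (n + m) / d :=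
    Nat.div_pos (Nat.le_of_dvd (by omega) hdy) hd
  calc χt (n + m) = χt (d * ((n + m) / d)) := by rw [Nat.mul_div_cancel' hdy]
    _ = χt d * χ (((n + m) / d : ℕ) : ZMod q) := by rw [hmul d _ hd hy, hagree _ hcop]
    _ = χt d * χ (((a + m) / d : ℕ) : ZMod q) := by
      rw [(ZMod.natCast_eq_natCast_iff _ _ _).mpr hquot]

/-- On good residue classes `a` mod `q^k`, the value `χ̃(n+m)` for
`n ≡ a (mod q^k)` and `1 ≤ m ≤ 2H` equals
`χ̃(gcd(a+m, q^k)) ⋅ χ((a+m)/gcd(a+m, q^k))`, and in particular depends only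
on `a` and `m`, not on `n`. -/
theorem good_residue_value (q k H : ℕ) (hq : 2 ≤ q) (hk : 1 ≤ k) (hH : 1 ≤ H)
    (χ : DirichletCharacter ℂ q) (χt : ℕ → ℂ)
    (hnorm : ∀ n, 0 < n → ‖χt n‖ = 1)
    (hmul : ∀ m n, 0 < m → 0 < n → χt (m * n) = χt m * χt n)
    (hagree : ∀ n : ℕ, Nat.Coprime n q → χt n = χ (n : ZMod q))
    (a : ℕ) (ha : 1 ≤ a)
    (hgood : ∀ p : ℕ, p.Prime → p ∣ q →
      ∀ m ∈ Finset.Icc 1 (2 * H), ¬ p ^ k ∣ a + m) :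
    ∀ n : ℕ, 0 < n → n % q ^ k = a % q ^ k →
      ∀ m ∈ Finset.Icc 1 (2 * H),
        χt (n + m) = χt (Nat.gcd (a + m) (q ^ k)) *
          χ ((((a + m) / Nat.gcd (a + m) (q ^ k) : ℕ)) : ZMod q) :=
  good_residue_value_general q k H hq hk χ χt hmul hagree a hgood
end
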